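/- arXiv:2407.01227 — 8 statements merged into one kernel-verified Lean document; each statement's English description precedes it below -/
import Mathlib

section
/- For any tree T on n ≥ 2 vertices labeled 1,…,n, the determinant of its distance matrix M(T) = (d(i,j)) equals (-1)^(n-1) (n-1) 2^(n-2), where d(i,j) is the number of edges on the unique path from i to j. -/
open SimpleGraph Matrix
set_option linter.unusedSectionVars false
set_option linter.unusedVariables false
set_option maxHeartbeats 1000000

section GraphLemmas
variable {V : Type} [Fintype V] [DecidableEq V] {G : SimpleGraph V} {v u : V}






/-- A finite tree with at least two vertices has a leaf. -/
lemma tree_exists_leaf (hT : G.IsTree) (h2 : 2 ≤ Fintype.card V) :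
    ∃ v u : V, G.Adj v u ∧ ∀ w, G.Adj v w → w = u := by
  classical
  by_contra hcon
  push_neg at hcon
  -- every vertex has a neighbor
  have hnb : ∀ v : V, ∃ u, G.Adj v u := by
    intro v
    obtain ⟨w, hw⟩ := Fintype.exists_ne_of_one_lt_card (by omega) v
    obtain ⟨p⟩ := hT.isConnected.preconnected v w
    have hnn : ¬ p.Nil := SimpleGraph.Walk.not_nil_of_ne (Ne.symm hw)
    exact ⟨p.getVert 1, SimpleGraph.Walk.adj_snd hnn⟩
  have hdeg : ∀ v : V, 2 ≤ G.degree v := by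
    intro v
    obtain ⟨u, hu⟩ := hnb v
    obtain ⟨w, hw, hwu⟩ := hcon v u hu
    have : ({u, w} : Finset V) ⊆ G.neighborFinset v := by
      intro x hx
      simp only [Finset.mem_insert, Finset.mem_singleton] at hx
      rcases hx with rfl | rfl <;> simp [SimpleGraph.mem_neighborFinset, hu, hw]
    calc 2 = ({u, w} : Finset V).card := by rw [Finset.card_insert_of_notMem (by simp [Ne.symm hwu]), Finset.card_singleton]
    _ ≤ (G.neighborFinset v).card := Finset.card_le_card this
    _ = G.degree v := rfl
  have hsum := G.sum_degrees_eq_twice_card_edges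
  have hcard := hT.card_edgeFinset
  have : 2 * Fintype.card V ≤ ∑ v : V, G.degree v := by
    calc 2 * Fintype.card V = ∑ _v : V, 2 := by simp [Finset.sum_const, mul_comm]
    _ ≤ ∑ v : V, G.degree v := Finset.sum_le_sum fun v _ => hdeg v
  omega

/-- distance from a leaf. -/
lemma dist_leaf {v u : V} (hT : G.IsTree) (hadj : G.Adj v u)
    (huniq : ∀ w, G.Adj v w → w = u) {i : V} (hi : i ≠ v) :
    G.dist v i = G.dist u i + 1 := by
  obtain ⟨p, hp, hlen⟩ := hT.isConnected.exists_path_of_dist v i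
  have hnn : ¬ p.Nil := SimpleGraph.Walk.not_nil_of_ne (Ne.symm hi)
  have h1 : p.getVert 1 = u := huniq _ (SimpleGraph.Walk.adj_snd hnn)
  have htail : (p.tail.copy h1 rfl).length = p.length - 1 := by
    simp only [SimpleGraph.Walk.length_copy]
    have := SimpleGraph.Walk.length_tail_add_one hnn
    omega
  have hle : G.dist u i ≤ p.length - 1 := htail ▸ SimpleGraph.dist_le _
  have hpos : 0 < G.dist v i := hT.isConnected.pos_dist_of_ne (Ne.symm hi)
  have htri : G.dist v i ≤ G.dist v u + G.dist u i := hT.isConnected.dist_triangle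
  have hvu : G.dist v u = 1 := SimpleGraph.dist_eq_one_iff_adj.mpr hadj
  omega

/-- A path between two non-leaf vertices avoids the leaf. -/
lemma leaf_notMem_support {v u x y : V} (hadj : G.Adj v u)
    (huniq : ∀ w, G.Adj v w → w = u) {p : G.Walk x y} (hp : p.IsPath)
    (hx : x ≠ v) (hy : y ≠ v) : v ∉ p.support := by
  intro hv
  set p₁ := p.takeUntil v hv with hp₁
  set p₂ := p.dropUntil v hv with hp₂
  have hspec : p₁.append p₂ = p := p.take_spec hv
  have hnodup : (p₁.support ++ p₂.support.tail).Nodup := by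
    have := hp.support_nodup
    rwa [← hspec, SimpleGraph.Walk.support_append] at this
  have hdisj : p₁.support.Disjoint p₂.support.tail := List.disjoint_of_nodup_append hnodup
  -- u is in p₁.support
  have hnn₁ : ¬ p₁.reverse.Nil := SimpleGraph.Walk.not_nil_of_ne (Ne.symm hx)
  have h1 : p₁.reverse.getVert 1 = u := huniq _ (SimpleGraph.Walk.adj_snd hnn₁)
  have hu₁ : u ∈ p₁.support := by
    rw [← List.mem_reverse, ← SimpleGraph.Walk.support_reverse]
    rw [SimpleGraph.Walk.mem_support_iff_exists_getVert]
    refine ⟨1, h1, ?_⟩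
    rw [SimpleGraph.Walk.nil_iff_length_eq] at hnn₁
    omega
  -- u is in p₂.support.tail
  have hnn₂ : ¬ p₂.Nil := SimpleGraph.Walk.not_nil_of_ne (Ne.symm hy)
  have h2 : p₂.getVert 1 = u := huniq _ (SimpleGraph.Walk.adj_snd hnn₂)
  have hu₂ : u ∈ p₂.support.tail := by
    rw [← SimpleGraph.Walk.support_tail_of_not_nil p₂ hnn₂]
    rw [← h2]
    exact SimpleGraph.Walk.start_mem_support _
  exact hdisj hu₁ hu₂

/-- lift a walk avoiding a set complement into the induced graph -/
lemma walk_to_induce {s : Set V} :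
    ∀ {a b : V} (p : G.Walk a b), (∀ w ∈ p.support, w ∈ s) →
    ∀ (ha : a ∈ s) (hb : b ∈ s),
    ∃ q : (G.induce s).Walk ⟨a, ha⟩ ⟨b, hb⟩, q.length = p.length := by
  intro a b p
  induction p with
  | nil => intro _ ha hb; exact ⟨SimpleGraph.Walk.nil, rfl⟩
  | @cons a c b h q ih =>
    intro hsup ha hb
    have hc : c ∈ s := hsup c (by simp)
    obtain ⟨q', hq'⟩ := ih (fun w hw => hsup w (by simp [hw])) hc hb
    exact ⟨SimpleGraph.Walk.cons (by simpa using h) q', by simpa using hq'⟩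



/-- the homomorphism from an induced subgraph to the ambient graph -/
def induceHomVal (G : SimpleGraph V) (s : Set V) : G.induce s →g G :=
  ⟨Subtype.val, fun h => h⟩

lemma exists_walk_induce (hT : G.IsTree) (hadj : G.Adj v u)
    (huniq : ∀ w, G.Adj v w → w = u) (x y : ({w | w ≠ v} : Set V)) :
    ∃ q : (G.induce ({w | w ≠ v} : Set V)).Walk x y, q.length = G.dist (x : V) (y : V) := by
  obtain ⟨p, hp, hlen⟩ := hT.isConnected.exists_path_of_dist (x : V) (y : V)
  have hvp : v ∉ p.support := leaf_notMem_support hadj huniq hp x.2 y.2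
  obtain ⟨q, hq⟩ := walk_to_induce p (fun w hw => show w ≠ v from fun hwv => hvp (hwv ▸ hw)) x.2 y.2
  exact ⟨q, hq.trans hlen⟩

lemma dist_induce (hT : G.IsTree) (hadj : G.Adj v u)
    (huniq : ∀ w, G.Adj v w → w = u) (x y : ({w | w ≠ v} : Set V)) :
    (G.induce ({w | w ≠ v} : Set V)).dist x y = G.dist (x : V) (y : V) := by
  obtain ⟨q, hq⟩ := exists_walk_induce hT hadj huniq x y
  have h1 : (G.induce ({w | w ≠ v} : Set V)).dist x y ≤ G.dist (x : V) (y : V) :=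
    hq ▸ SimpleGraph.dist_le q
  obtain ⟨q', hq'⟩ := (SimpleGraph.Walk.reachable q).exists_walk_length_eq_dist
  have h2 : G.dist (x : V) (y : V) ≤ (G.induce ({w | w ≠ v} : Set V)).dist x y := by
    have hle := SimpleGraph.dist_le (q'.map (induceHomVal G _))
    rwa [SimpleGraph.Walk.length_map, hq'] at hle
  omega

lemma induce_isTree (hT : G.IsTree) (hadj : G.Adj v u)
    (huniq : ∀ w, G.Adj v w → w = u) :
    (G.induce ({w | w ≠ v} : Set V)).IsTree := by
  constructor
  · rw [SimpleGraph.connected_iff]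
    refine ⟨fun x y => ?_, ⟨⟨u, hadj.ne'⟩⟩⟩
    obtain ⟨q, _⟩ := exists_walk_induce hT hadj huniq x y
    exact ⟨q⟩
  · intro w c hc
    have hcyc : (c.map (induceHomVal G _)).IsCycle :=
      hc.map Subtype.val_injective
    exact hT.IsAcyclic _ hcyc


end GraphLemmas


/-- `Option α ≃ α ⊕ Unit` with `none ↦ inr`. -/
def optSum (α : Type) : Option α ≃ α ⊕ Unit where
  toFun o := o.elim (Sum.inr Unit.unit) Sum.inl
  invFun x := x.elim some (fun _ => none)
  left_inv o := by cases o <;> rfl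
  right_inv x := by rcases x with x | x <;> rfl

/-- Cofactor expansion: if the `none` row of a matrix over `Option α` is the
standard basis vector at `none`, the determinant is that of the minor. -/
lemma det_option {α : Type} [Fintype α] [DecidableEq α]
    (A : Matrix (Option α) (Option α) ℤ) (h : A none = Pi.single none 1) :
    A.det = (A.submatrix some some).det := by
  have hA : A.submatrix (optSum α).symm (optSum α).symm =
      Matrix.fromBlocks (A.submatrix some some)
        (Matrix.of fun i (_ : Unit) => A (some i) none)
        0 (Matrix.of fun (_ : Unit) (_ : Unit) => 1) := by
    ext i j
    rcases i with i | i <;> rcases j with j | j <;>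
      simp [optSum, Matrix.fromBlocks, h, Pi.single_eq_of_ne (Option.some_ne_none _)]
  have h2 : (Matrix.of fun (_ : Unit) (_ : Unit) => (1:ℤ)).det = 1 := by
    rw [Matrix.det_unique]; rfl
  calc A.det = (A.submatrix (optSum α).symm (optSum α).symm).det :=
        (Matrix.det_submatrix_equiv_self (optSum α).symm A).symm
  _ = (A.submatrix some some).det * (Matrix.of fun (_ : Unit) (_ : Unit) => (1:ℤ)).det := by
      rw [hA, Matrix.det_fromBlocks_zero₂₁]
  _ = (A.submatrix some some).det := by rw [h2, mul_one]

/-- The distance matrix of a graph, over `ℤ`. -/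
noncomputable def distM {V : Type} [Fintype V] (G : SimpleGraph V) : Matrix V V ℤ :=
  Matrix.of fun i j => (G.dist i j : ℤ)

@[simp] lemma distM_apply {V : Type} [Fintype V] (G : SimpleGraph V) (i j : V) :
    distM G i j = (G.dist i j : ℤ) := rfl

/-- The distance matrix bordered by a row and column of ones (with 0 in the corner). -/
noncomputable def bordM {V : Type} [Fintype V] (G : SimpleGraph V) : Matrix (Option V) (Option V) ℤ :=
  Matrix.of fun i j => i.elim (j.elim 0 fun _ => 1) fun a => j.elim 1 fun b => (G.dist a b : ℤ)

@[simp] lemma bordM_nn {V : Type} [Fintype V] (G : SimpleGraph V) :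
    bordM G none none = 0 := rfl
@[simp] lemma bordM_ns {V : Type} [Fintype V] (G : SimpleGraph V) (j : V) :
    bordM G none (some j) = 1 := rfl
@[simp] lemma bordM_sn {V : Type} [Fintype V] (G : SimpleGraph V) (i : V) :
    bordM G (some i) none = 1 := rfl
@[simp] lemma bordM_ss {V : Type} [Fintype V] (G : SimpleGraph V) (i j : V) :
    bordM G (some i) (some j) = (G.dist i j : ℤ) := rfl

theorem key (m : ℕ) : ∀ (V : Type) [Fintype V] [DecidableEq V] (G : SimpleGraph V),
    G.IsTree → Fintype.card V = m + 1 →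
    (distM G).det = (-1)^m * (m : ℤ) * 2^(m-1) ∧
    (bordM G).det = (-1)^(m+1) * 2^m := by
  induction m with
  | zero =>
    intro V _ _ G hT hcard
    obtain ⟨x, hx⟩ := Fintype.card_eq_one_iff.mp hcard
    haveI : Unique V := ⟨⟨x⟩, hx⟩
    constructor
    · rw [Matrix.det_unique]; simp
    · let e : Fin 2 ≃ Option V :=
        { toFun := fun i => if i = 0 then none else some x
          invFun := fun o => o.elim 0 fun _ => 1
          left_inv := by intro i; fin_cases i <;> simp
          right_inv := by
            rintro (_ | y)
            · simp
            · simp [hx y] }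
      have h1 : (bordM G).det = ((bordM G).submatrix e e).det :=
        (Matrix.det_submatrix_equiv_self e _).symm
      rw [h1, Matrix.det_fin_two]
      have e0 : e 0 = none := rfl
      have e1 : e 1 = some x := rfl
      simp [Matrix.submatrix_apply, e0, e1]
  | succ m ih =>
    intro V _ _ G hT hcard
    obtain ⟨v, u, hadj, huniq⟩ := tree_exists_leaf hT (by omega)
    set s : Set V := {w | w ≠ v} with hs
    set G' := G.induce s with hG'
    have hcard' : Fintype.card ↥s = m + 1 := by
      have h1 : Fintype.card ↥s = Fintype.card {x : V // ¬ x = v} :=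
        Fintype.card_congr (Equiv.subtypeEquivRight (by intro x; simp [hs]))
      rw [h1, Fintype.card_subtype_compl, Fintype.card_subtype_eq]
      omega
    obtain ⟨hA', hB'⟩ := ih ↥s G' (induce_isTree hT hadj huniq) hcard'
    set u' : ↥s := ⟨u, hadj.ne'⟩ with hu'
    -- distance facts over ℤ
    have hd' : ∀ x y : ↥s, (G'.dist x y : ℤ) = (G.dist (x : V) (y : V) : ℤ) := by
      intro x y
      have h := dist_induce hT hadj huniq x y
      simp only [hG']
      exact_mod_cast h
    have dvv : (G.dist v v : ℤ) = 0 := by simp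
    have duu : (G.dist u u : ℤ) = 0 := by simp
    have dvu : (G.dist v u : ℤ) = 1 := by
      have h := SimpleGraph.dist_eq_one_iff_adj.mpr hadj
      exact_mod_cast h
    have duv : (G.dist u v : ℤ) = 1 := by
      rw [SimpleGraph.dist_comm (u := u) (v := v)]
      exact dvu
    have d1 : ∀ x : ↥s, (G.dist v (x : V) : ℤ) = (G.dist u (x : V) : ℤ) + 1 := by
      intro x
      have h := dist_leaf hT hadj huniq (i := (x : V)) x.2
      exact_mod_cast h
    have d2 : ∀ x : ↥s, (G.dist (x : V) v : ℤ) = (G.dist (x : V) u : ℤ) + 1 := by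
      intro x
      rw [SimpleGraph.dist_comm (u := (x : V)) (v := v),
        SimpleGraph.dist_comm (u := (x : V)) (v := u)]
      exact d1 x
    -- the reindexing equivalence
    let e : Option ↥s ≃ V :=
      { toFun := fun o => o.elim v Subtype.val
        invFun := fun x => if h : x = v then none else some ⟨x, h⟩
        left_inv := by
          rintro (_ | ⟨x, hx⟩)
          · simp
          · have hx' : x ≠ v := hx
            simp [hx']
        right_inv := by
          intro x
          by_cases h : x = v <;> simp [h] }
    have he0 : e none = v := rfl
    have he1 : ∀ x : ↥s, e (some x) = (x : V) := fun _ => rfl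
    constructor
    · -- Part A : determinant of the distance matrix
      set F : Matrix (Option ↥s) (Option ↥s) ℤ := (distM G).submatrix e e with hF
      have hFdet : (distM G).det = F.det := (Matrix.det_submatrix_equiv_self e _).symm
      have hne : (none : Option ↥s) ≠ some u' := by simp
      set F₁ := F.updateRow none (F none + (-1:ℤ) • F (some u')) with hF₁
      have hdet1 : F₁.det = F.det := Matrix.det_updateRow_add_smul_self F hne (-1)
      set F₂ := F₁.updateCol none (fun k => F₁ k none + (-1:ℤ) • F₁ k (some u')) with hF₂
      have hdet2 : F₂.det = F₁.det := Matrix.det_updateCol_add_smul_self F₁ hne (-1)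
      -- entries of F₂
      have hF₁row : ∀ j, F₁ none j = F none j - F (some u') j := by
        intro j; rw [hF₁, Matrix.updateRow_self]; simp [sub_eq_add_neg]
      have hF₁other : ∀ (x : ↥s) j, F₁ (some x) j = F (some x) j := by
        intro x j; rw [hF₁, Matrix.updateRow_ne (by simp)]
      have hF2nn : F₂ none none = -2 := by
        rw [hF₂, Matrix.updateCol_self]
        rw [hF₁row, hF₁row]
        have : ∀ a b : Option ↥s, F a b = (G.dist (e a) (e b) : ℤ) := fun a b => rfl
        simp only [this, he0, he1, smul_eq_mul]
        rw [dvv, duv, dvu, duu]; ring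
      have hF2ns : ∀ y : ↥s, F₂ none (some y) = 1 := by
        intro y
        rw [hF₂, Matrix.updateCol_ne (by simp), hF₁row]
        show (G.dist v (y:V) : ℤ) - (G.dist u (y:V) : ℤ) = 1
        rw [d1 y]; ring
      have hF2sn : ∀ x : ↥s, F₂ (some x) none = 1 := by
        intro x
        rw [hF₂, Matrix.updateCol_self, hF₁other, hF₁other]
        show (G.dist (x:V) v : ℤ) + (-1) * (G.dist (x:V) u : ℤ) = 1
        rw [d2 x]; ring
      have hF2ss : ∀ x y : ↥s, F₂ (some x) (some y) = (G.dist (x:V) (y:V) : ℤ) := by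
        intro x y
        rw [hF₂, Matrix.updateCol_ne (by simp), hF₁other]
        rfl
      -- split the `none` row
      set r : Option ↥s → ℤ := fun o => o.elim 0 fun _ => 1 with hr
      have hrow : F₂ none = r + (-2:ℤ) • Pi.single none 1 := by
        funext o
        rcases o with _ | y
        · simp [hF2nn, hr]
        · simp [hF2ns y, hr, Pi.single_eq_of_ne (Option.some_ne_none y)]
      have hsplit : F₂.det = (F₂.updateRow none r).det
          + (-2) * (F₂.updateRow none (Pi.single none 1)).det := by
        conv_lhs => rw [← Matrix.updateRow_eq_self F₂ none, hrow]
        rw [Matrix.det_updateRow_add, Matrix.det_updateRow_smul]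
      have hfirst : F₂.updateRow none r = bordM G' := by
        ext o₁ o₂
        rcases o₁ with _ | x <;> rcases o₂ with _ | y
        · simp [Matrix.updateRow_self, hr]
        · simp [Matrix.updateRow_self, hr]
        · rw [Matrix.updateRow_ne (by simp)]; simp [hF2sn x]
        · rw [Matrix.updateRow_ne (by simp)]
          simp only [hF2ss x y, bordM_ss]
          exact (hd' x y).symm
      have hsecond : (F₂.updateRow none (Pi.single none 1)).det = (distM G').det := by
        rw [det_option _ (Matrix.updateRow_self)]
        congr 1
        ext x y
        rw [Matrix.submatrix_apply, Matrix.updateRow_ne (by simp)]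
        simp only [hF2ss x y, distM_apply]
        exact (hd' x y).symm
      rw [hFdet, ← hdet1, ← hdet2, hsplit, hfirst, hsecond, hA', hB']
      rcases m with _ | k
      · norm_num
      · have h2 : ((k+1) : ℕ) - 1 = k := by omega
        have h3 : ((k+1+1) : ℕ) - 1 = k + 1 := by omega
        rw [h2, h3]
        push_cast
        ring
    · -- Part B : determinant of the bordered matrix
      set ee := Equiv.optionCongr e with hee
      set H : Matrix (Option (Option ↥s)) (Option (Option ↥s)) ℤ :=
        (bordM G).submatrix ee ee with hH
      have hHdet : (bordM G).det = H.det := (Matrix.det_submatrix_equiv_self ee _).symm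
      set i₀ : Option (Option ↥s) := some none with hi₀
      set uu : Option (Option ↥s) := some (some u') with huu
      have hne : i₀ ≠ uu := by simp [hi₀, huu]
      -- entries of H
      have hHnn : H none none = 0 := rfl
      have hHn : ∀ w, H none (some w) = 1 := fun w => rfl
      have hHsn : ∀ w, H (some w) none = 1 := fun w => rfl
      have hHss : ∀ w₁ w₂, H (some w₁) (some w₂) = (G.dist (e w₁) (e w₂) : ℤ) := fun _ _ => rfl
      set H₁ := H.updateRow i₀ (H i₀ + (-1:ℤ) • H uu) with hH₁
      have hdet1 : H₁.det = H.det := Matrix.det_updateRow_add_smul_self H hne (-1)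
      set H₂ := H₁.updateCol i₀ (fun k => H₁ k i₀ + (-1:ℤ) • H₁ k uu) with hH₂
      have hdet2 : H₂.det = H₁.det := Matrix.det_updateCol_add_smul_self H₁ hne (-1)
      have hH₁row : ∀ j, H₁ i₀ j = H i₀ j - H uu j := by
        intro j; rw [hH₁, Matrix.updateRow_self]; simp [sub_eq_add_neg]
      have hH₁other : ∀ k j, k ≠ i₀ → H₁ k j = H k j := by
        intro k j hk; rw [hH₁, Matrix.updateRow_ne hk]
      -- entries of H₂
      have hH2ii : H₂ i₀ i₀ = -2 := by
        rw [hH₂, Matrix.updateCol_self, hH₁row, hH₁row]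
        simp only [hi₀, huu, hHss, he0, he1, smul_eq_mul]
        rw [dvv, duv, dvu, duu]; ring
      have hH2in : H₂ i₀ none = 0 := by
        rw [hH₂, Matrix.updateCol_ne (by simp [hi₀]), hH₁row]
        simp only [hi₀, huu, hHsn]; ring
      have hH2is : ∀ y : ↥s, H₂ i₀ (some (some y)) = 1 := by
        intro y
        rw [hH₂, Matrix.updateCol_ne (by simp [hi₀]), hH₁row]
        simp only [hi₀, huu, hHss, he0, he1]
        rw [d1 y]; ring
      have hH2ni : H₂ none i₀ = 0 := by
        rw [hH₂, Matrix.updateCol_self, hH₁other _ _ (by simp [hi₀]),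
          hH₁other _ _ (by simp [hi₀])]
        simp only [hi₀, huu, hHn, smul_eq_mul]; ring
      have hH2nn : H₂ none none = 0 := by
        rw [hH₂, Matrix.updateCol_ne (by simp [hi₀]), hH₁other _ _ (by simp [hi₀]), hHnn]
      have hH2ns : ∀ y : ↥s, H₂ none (some (some y)) = 1 := by
        intro y
        rw [hH₂, Matrix.updateCol_ne (by simp [hi₀]), hH₁other _ _ (by simp [hi₀]), hHn]
      have hH2si : ∀ x : ↥s, H₂ (some (some x)) i₀ = 1 := by
        intro x
        rw [hH₂, Matrix.updateCol_self, hH₁other _ _ (by simp [hi₀]),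
          hH₁other _ _ (by simp [hi₀])]
        simp only [hi₀, huu, hHss, he0, he1, smul_eq_mul]
        rw [d2 x]; ring
      have hH2sn : ∀ x : ↥s, H₂ (some (some x)) none = 1 := by
        intro x
        rw [hH₂, Matrix.updateCol_ne (by simp [hi₀]), hH₁other _ _ (by simp [hi₀]), hHsn]
      have hH2ss : ∀ x y : ↥s, H₂ (some (some x)) (some (some y)) = (G.dist (x:V) (y:V) : ℤ) := by
        intro x y
        rw [hH₂, Matrix.updateCol_ne (by simp [hi₀]), hH₁other _ _ (by simp [hi₀]), hHss]
        rfl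
      -- split the i₀ row
      set r₂ : Option (Option ↥s) → ℤ := fun w => w.elim 0 fun w' => w'.elim 0 fun _ => 1 with hr₂
      have hrow : H₂ i₀ = r₂ + (-2:ℤ) • Pi.single i₀ 1 := by
        funext o
        rcases o with _ | (_ | y)
        · simp [hH2in, hr₂, Pi.single_eq_of_ne (by simp [hi₀] : (none : Option (Option ↥s)) ≠ i₀)]
        · simp [hi₀] at hH2ii ⊢
          simp [hH2ii, hr₂]
        · have : (some (some y) : Option (Option ↥s)) ≠ i₀ := by simp [hi₀]
          simp [hH2is y, hr₂, Pi.single_eq_of_ne this]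
      have hnonerow : H₂ none = r₂ := by
        funext o
        rcases o with _ | (_ | y)
        · simp [hH2nn, hr₂]
        · simpa [hr₂] using hH2ni
        · simp [hH2ns y, hr₂]
      have hsplit : H₂.det = (H₂.updateRow i₀ r₂).det
          + (-2) * (H₂.updateRow i₀ (Pi.single i₀ 1)).det := by
        conv_lhs => rw [← Matrix.updateRow_eq_self H₂ i₀, hrow]
        rw [Matrix.det_updateRow_add, Matrix.det_updateRow_smul]
      have hfirst : (H₂.updateRow i₀ r₂).det = 0 := by
        apply Matrix.det_zero_of_row_eq (i := none) (j := i₀) (by simp [hi₀])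
        rw [Matrix.updateRow_ne (by simp [hi₀]), Matrix.updateRow_self, hnonerow]
      have hsecond : (H₂.updateRow i₀ (Pi.single i₀ 1)).det = (bordM G').det := by
        set K := H₂.updateRow i₀ (Pi.single i₀ 1) with hK
        set σ : Option (Option ↥s) ≃ Option (Option ↥s) := Equiv.swap none i₀ with hσ
        have hKdet : K.det = (K.submatrix σ σ).det := (Matrix.det_submatrix_equiv_self σ K).symm
        have hKrow : (K.submatrix σ σ) none = Pi.single none 1 := by
          funext j
          rw [Matrix.submatrix_apply]
          have hσn : σ none = i₀ := Equiv.swap_apply_left none i₀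
          rw [hσn, hK, Matrix.updateRow_self]
          by_cases hj : j = none
          · subst hj; rw [hσn]; simp
          · have hσj : σ j ≠ i₀ := by
              intro hc
              apply hj
              have := congrArg σ.symm hc
              rwa [Equiv.symm_apply_apply, hσ, Equiv.symm_swap, Equiv.swap_apply_right] at this
            rw [Pi.single_eq_of_ne hσj, Pi.single_eq_of_ne hj]
        rw [hKdet, det_option _ hKrow]
        congr 1
        have hσ1 : σ (some none) = none := Equiv.swap_apply_right none i₀
        have hσ2 : ∀ x : ↥s, σ (some (some x)) = some (some x) := fun x =>
          Equiv.swap_apply_of_ne_of_ne (by simp) (by simp [hi₀])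
        ext w₁ w₂
        rw [Matrix.submatrix_apply, Matrix.submatrix_apply]
        rcases w₁ with _ | x <;> rcases w₂ with _ | y
        · rw [hσ1, hK, Matrix.updateRow_ne (by simp [hi₀]), hH2nn, bordM_nn]
        · rw [hσ1, hσ2, hK, Matrix.updateRow_ne (by simp [hi₀]), hH2ns y, bordM_ns]
        · rw [hσ1, hσ2, hK, Matrix.updateRow_ne (by simp [hi₀]), hH2sn x, bordM_sn]
        · rw [hσ2, hσ2, hK, Matrix.updateRow_ne (by simp [hi₀]), hH2ss x y, bordM_ss]
          exact (hd' x y).symm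
      rw [hHdet, ← hdet1, ← hdet2, hsplit, hfirst, hsecond, hB']
      push_cast
      ring


/-- **Graham–Pollak formula.** For any tree `T` on `n ≥ 2` vertices, the determinant of
its distance matrix equals `(-1)^(n-1) (n-1) 2^(n-2)`. -/
theorem graham_pollak (n : ℕ) (hn : 2 ≤ n) (G : SimpleGraph (Fin n)) (hG : G.IsTree) :
    (Matrix.of fun i j : Fin n => (G.dist i j : ℤ)).det
      = (-1) ^ (n - 1) * ((n - 1 : ℕ) : ℤ) * 2 ^ (n - 2) := by
  have h := (key (n - 1) (Fin n) G hG (by simp only [Fintype.card_fin]; omega)).1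
  have h2 : n - 1 - 1 = n - 2 := by omega
  rw [h2] at h
  exact h
end

section
/- The determinant of the distance matrix of a tree on n vertices depends only on n, not on the structure of the tree: any two trees on n vertices have distance matrices with the same determinant. -/
/-!
If `v` is a leaf of a tree `T` with neighbour `u`, then `d(v, w) = d(u, w) + 1` for all `w ≠ v`.
Subtracting row and column `u` from row and column `v` of the distance matrix therefore keeps the
determinant and turns row and column `v` into ones, with `-2` on the diagonal, while the remaining
block is the distance matrix of `T - v`. Distance matrices bordered by such rows and columns are
thus stable under leaf removal: each step trades one vertex for one border row, and after `n - 1`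
steps every tree on `n` vertices has reached the same one-vertex bordered matrix.
-/

namespace Equiv

variable {V : Type*} [DecidableEq V]

def sumComplSingletonOption (v : V) (ι : Type*) : (({v}ᶜ : Set V) ⊕ Option ι) ≃ V ⊕ ι where
  toFun
    | .inl a => .inl a
    | .inr none => .inl v
    | .inr (some i) => .inr i
  invFun
    | .inl b => if h : b = v then .inr none else .inl ⟨b, h⟩
    | .inr i => .inr (some i)
  left_inv := by
    rintro (⟨a, ha⟩ | _ | i)
    · simp [show a ≠ v from ha]
    all_goals simp
  right_inv := by
    rintro (b | i)
    · by_cases h : b = v <;> simp [h]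
    · rfl

@[simp]
lemma sumComplSingletonOption_inl (v : V) (ι : Type*) (a : ({v}ᶜ : Set V)) :
    sumComplSingletonOption v ι (.inl a) = .inl a := rfl

@[simp]
lemma sumComplSingletonOption_none (v : V) (ι : Type*) :
    sumComplSingletonOption v ι (.inr none) = .inl v := rfl

@[simp]
lemma sumComplSingletonOption_some (v : V) (ι : Type*) (i : ι) :
    sumComplSingletonOption v ι (.inr (some i)) = .inr i := rfl

end Equiv

namespace Matrix

variable {V ι R : Type*}

def bordered (ι : Type*) [DecidableEq ι] [AddGroupWithOne R] (D : Matrix V V R) :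
    Matrix (V ⊕ ι) (V ⊕ ι) R :=
  fromBlocks D (of fun _ _ => 1) (of fun _ _ => 1) (diagonal fun _ => -2)

variable [CommRing R] [DecidableEq ι] [Fintype ι] [Fintype V] [DecidableEq V]

theorem det_bordered_submatrix {W : Type*} [Fintype W] [DecidableEq W] (D : Matrix V V R)
    (e : W ≃ V) : (bordered ι (D.submatrix e e)).det = (bordered ι D).det := by
  rw [← det_submatrix_equiv_self (e.sumCongr (Equiv.refl ι))]
  congr 1
  ext (a | i) (b | j) <;> rfl

theorem det_bordered_empty (D : Matrix V V R) : (bordered Empty D).det = D.det := by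
  rw [← det_submatrix_equiv_self (Equiv.sumEmpty V Empty).symm]
  rfl

theorem det_bordered_eq_det_bordered_compl_singleton {D : Matrix V V R} {u v : V} (huv : u ≠ v)
    (hdiag : D v v = D u u) (hrow : ∀ w ≠ v, D v w = D u w + 1)
    (hcol : ∀ w ≠ v, D w v = D w u + 1) :
    (bordered ι D).det =
      (bordered (Option ι) (D.submatrix (↑) (↑) : Matrix ({v}ᶜ : Set V) ({v}ᶜ : Set V) R)).det := by
  set M := bordered ι D
  have hne : (.inl v : V ⊕ ι) ≠ .inl u := by simpa using huv.symm
  set M₁ := M.updateRow (.inl v) (M (.inl v) + (-1 : R) • M (.inl u))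
  set M₂ := M₁.updateCol (.inl v) (fun i => M₁ i (.inl v) + (-1 : R) • M₁ i (.inl u))
  have hM₂ : M₂.submatrix (Equiv.sumComplSingletonOption v ι) (Equiv.sumComplSingletonOption v ι)
      = bordered (Option ι) (D.submatrix (↑) (↑)) := by
    have hmem (a : ({v}ᶜ : Set V)) : (a : V) ≠ v := a.2
    ext (a | _ | i) (b | _ | j)
    all_goals
      simp [M₂, M₁, M, bordered, updateRow_apply, diagonal_apply, hmem, hdiag, hrow, hcol,
        hrow u huv, hcol u huv, show (-1 : R) + -1 = -2 by norm_num]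
  rw [← hM₂, det_submatrix_equiv_self, det_updateCol_add_smul_self _ hne,
    det_updateRow_add_smul_self _ hne]

end Matrix

namespace SimpleGraph

variable {V : Type*} {G : SimpleGraph V}

lemma IsAcyclic.dist_induce_of_reachable (hG : G.IsAcyclic) {s : Set V} {a b : s}
    (hab : (G.induce s).Reachable a b) : (G.induce s).dist a b = G.dist a b := by
  let f : G.induce s ↪g G := Embedding.induce s
  obtain ⟨q, hq, hqlen⟩ := hab.exists_path_of_dist
  obtain ⟨p, hp, hplen⟩ := (hab.map f.toHom).exists_path_of_dist
  have hqp : (⟨q.map f.toHom, hq.map f.injective⟩ : G.Path _ _) = ⟨p, hp⟩ :=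
    (hG.subsingleton_path _ _).elim _ _
  calc (G.induce s).dist a b = (q.map f.toHom).length := by rw [Walk.length_map, hqlen]
    _ = G.dist a b := congrArg (fun r : G.Path _ _ => r.1.length) hqp |>.trans hplen

lemma Reachable.dist_eq_dist_add_one_of_unique_adj {u v w : V} (huw : G.Reachable u w)
    (hvu : G.Adj v u) (hu : ∀ x, G.Adj v x → x = u) (hw : w ≠ v) :
    G.dist v w = G.dist u w + 1 := by
  refine le_antisymm ?_ ?_
  · simpa [dist_eq_one_iff_adj.2 hvu, add_comm] using huw.dist_triangle_right v
  · obtain ⟨p, hp⟩ := (hvu.reachable.trans huw).exists_walk_length_eq_dist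
    cases p with
    | nil => exact absurd rfl hw
    | cons h q =>
      obtain rfl := hu _ h
      simpa [← hp] using dist_le q

lemma IsTree.induce_compl_singleton_of_degree_eq_one {v : V} [Fintype (G.neighborSet v)]
    (hG : G.IsTree) (hv : G.degree v = 1) : (G.induce {v}ᶜ).IsTree :=
  ⟨hG.connected.induce_compl_singleton_of_degree_eq_one hv, hG.isAcyclic.induce _⟩

noncomputable def distMatrix (R : Type*) [NatCast R] (G : SimpleGraph V) : Matrix V V R :=
  Matrix.of fun i j => (G.dist i j : R)

open Matrix

variable {R : Type*} [CommRing R]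

theorem IsTree.det_bordered_distMatrix_eq_compl_singleton [Fintype V] [DecidableEq V]
    {ι : Type*} [Fintype ι] [DecidableEq ι] (hG : G.IsTree) {v : V} [Fintype (G.neighborSet v)]
    (hv : G.degree v = 1) :
    (bordered ι (G.distMatrix R)).det =
      (bordered (Option ι) ((G.induce {v}ᶜ).distMatrix R)).det := by
  obtain ⟨u, hvu, hu⟩ := degree_eq_one_iff_existsUnique_adj.mp hv
  have hdist (w : V) (hw : w ≠ v) : G.dist v w = G.dist u w + 1 :=
    (hG.connected u w).dist_eq_dist_add_one_of_unique_adj hvu hu hw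
  have hinduce : (G.distMatrix R).submatrix (↑) (↑) = (G.induce {v}ᶜ).distMatrix R := by
    ext a b
    have hab := (hG.induce_compl_singleton_of_degree_eq_one hv).connected a b
    simp [distMatrix, hG.isAcyclic.dist_induce_of_reachable hab]
  rw [← hinduce]
  exact det_bordered_eq_det_bordered_compl_singleton hvu.ne' (by simp [distMatrix])
    (fun w hw => by simp [distMatrix, hdist w hw])
    (fun w hw => by simp [distMatrix, dist_comm, hdist w hw])

theorem det_bordered_distMatrix_eq_of_isTree {V₁ V₂ : Type*} [Fintype V₁] [DecidableEq V₁]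
    [Fintype V₂] [DecidableEq V₂] {G₁ : SimpleGraph V₁} {G₂ : SimpleGraph V₂}
    (h₁ : G₁.IsTree) (h₂ : G₂.IsTree) (hcard : Fintype.card V₁ = Fintype.card V₂)
    (ι : Type*) [Fintype ι] [DecidableEq ι] :
    (bordered ι (G₁.distMatrix R)).det = (bordered ι (G₂.distMatrix R)).det := by
  classical
  induction hn : Fintype.card V₁ using Nat.strong_induction_on generalizing V₁ V₂ ι with
  | _ n ih =>
  obtain hle | hlt := le_or_gt n 1
  · have : Subsingleton V₁ := Fintype.card_le_one_iff_subsingleton.mp (hn ▸ hle)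
    have : Subsingleton V₂ := Fintype.card_le_one_iff_subsingleton.mp (hcard ▸ hn ▸ hle)
    have hG : G₁.distMatrix R = (G₂.distMatrix R).submatrix (Fintype.equivOfCardEq hcard)
        (Fintype.equivOfCardEq hcard) := by
      ext a b
      simp [distMatrix, Subsingleton.elim a b]
    rw [hG, det_bordered_submatrix]
  · have : Nontrivial V₁ := Fintype.one_lt_card_iff_nontrivial.mp (hn ▸ hlt)
    have : Nontrivial V₂ := Fintype.one_lt_card_iff_nontrivial.mp (hcard ▸ hn ▸ hlt)
    obtain ⟨v₁, hv₁⟩ := h₁.exists_vert_degree_one_of_nontrivial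
    obtain ⟨v₂, hv₂⟩ := h₂.exists_vert_degree_one_of_nontrivial
    rw [h₁.det_bordered_distMatrix_eq_compl_singleton hv₁,
      h₂.det_bordered_distMatrix_eq_compl_singleton hv₂]
    exact ih (n - 1) (by omega) (h₁.induce_compl_singleton_of_degree_eq_one hv₁)
      (h₂.induce_compl_singleton_of_degree_eq_one hv₂)
      (by simp only [Fintype.card_compl_set, Set.card_singleton, hcard]) _
      (by rw [Fintype.card_compl_set, Set.card_singleton, hn])

end SimpleGraph

/-- The determinant of the distance matrix of a tree on `n` vertices does not depend
on the structure of the tree: any two trees on `n` vertices have distance matrices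
with the same determinant. -/
theorem det_distance_matrix_tree_independent (n : ℕ)
    (G₁ G₂ : SimpleGraph (Fin n)) (h₁ : G₁.IsTree) (h₂ : G₂.IsTree) :
    (Matrix.of fun i j : Fin n => (G₁.dist i j : ℤ)).det
      = (Matrix.of fun i j : Fin n => (G₂.dist i j : ℤ)).det := by
  simpa only [Matrix.det_bordered_empty, SimpleGraph.distMatrix] using
    SimpleGraph.det_bordered_distMatrix_eq_of_isTree (R := ℤ) h₁ h₂ rfl Empty
end

section
/- Let A be a disconnected zero-sum arrowflow on a tree T, and let {i,j} be an edge of T carrying no arc of A. Then the map φ_A sending a catalyst (σ, f) in the arrowflow class C(A) to (σ∘(i j), f∘(i j)) is a well-defined sign-reversing involution on C(A) without fixed points; consequently Σ_{κ ∈ C(A)} sign(κ) = 0. -/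
/-! Since the edge `{i, j}` carries no arc of `A`, the steps `f i` and `f j` survive when the
starting points `i` and `j` are exchanged, so `(σ, f) ↦ (σ ∘ (i j), f ∘ (i j))` maps `C(A)` to
itself. It is an involution that flips the sign of `σ` and has no fixed point, so the terms of the
signed sum cancel in pairs. -/

open scoped Classical

/-- `IsStep G k m a b` : the arc `(a, b)` is a step of the unique path from `k` to `m`. -/
def IsStep {V : Type*} (G : SimpleGraph V) (k m a b : V) : Prop :=
  ∃ p : G.Walk k m, p.IsPath ∧ ∃ d ∈ p.darts, d.toProd = (a, b)

/-- A catalyst for `G` : a pair `(σ, f)` such that `f k` is a step of the path from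
`k` to `σ k` for every vertex `k`. -/
def IsCatalyst {n : ℕ} (G : SimpleGraph (Fin n))
    (κ : Equiv.Perm (Fin n) × (Fin n → Fin n × Fin n)) : Prop :=
  ∀ k, IsStep G k (κ.1 k) (κ.2 k).1 (κ.2 k).2

/-- The arrowflow induced by `f` : the multiset of the values of `f`. -/
def flowOf {n : ℕ} (f : Fin n → Fin n × Fin n) : Multiset (Fin n × Fin n) :=
  Multiset.map f Finset.univ.val

/-- The arrowflow class of `A` : the set of catalysts inducing arrowflow `A`. -/
def classOf {n : ℕ} (G : SimpleGraph (Fin n)) (A : Multiset (Fin n × Fin n)) :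
    Set (Equiv.Perm (Fin n) × (Fin n → Fin n × Fin n)) :=
  {κ | IsCatalyst G κ ∧ flowOf κ.2 = A}

namespace SimpleGraph.IsAcyclic

variable {V : Type*} {G : SimpleGraph V}

/-- The path from `i` to `m` is the path from `j` to `m` with the edge `{i, j}` either prepended
or removed, so every other step survives. -/
theorem isStep_of_adj (hG : G.IsAcyclic) {i j m a b : V} (hij : G.Adj i j)
    (hab : s(a, b) ≠ s(i, j)) (h : IsStep G j m a b) : IsStep G i m a b := by
  classical
  obtain ⟨p, hp, d, hd, hdab⟩ := h
  by_cases hi : i ∈ p.support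
  · refine ⟨p.dropUntil i hi, hp.dropUntil hi, d, ?_, hdab⟩
    have htake : p.takeUntil i hi = Walk.cons hij.symm Walk.nil :=
      congrArg Subtype.val <|
        (hG.subsingleton_path j i).elim ⟨_, hp.takeUntil hi⟩ (Path.singleton hij.symm)
    rw [← p.take_spec hi, Walk.darts_append, htake] at hd
    refine (List.mem_append.mp hd).resolve_left fun hd' => hab ?_
    obtain rfl : d = ⟨(j, i), hij.symm⟩ := by simpa using hd'
    obtain ⟨rfl, rfl⟩ := Prod.mk.inj hdab
    exact Sym2.eq_swap
  · exact ⟨.cons hij p, hp.cons hi, d, by simp [hd], hdab⟩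

end SimpleGraph.IsAcyclic

section Catalyst

variable {n : ℕ} {G : SimpleGraph (Fin n)}

theorem mem_flowOf (f : Fin n → Fin n × Fin n) (k : Fin n) : f k ∈ flowOf f :=
  Multiset.mem_map_of_mem f (Finset.mem_univ_val k)

theorem flowOf_comp_perm (f : Fin n → Fin n × Fin n) (e : Equiv.Perm (Fin n)) :
    flowOf (f ∘ e) = flowOf f := by
  rw [flowOf, flowOf, ← Multiset.map_map, Multiset.map_univ_val_equiv]

theorem IsCatalyst.mul_swap (hG : G.IsAcyclic) {κ : Equiv.Perm (Fin n) × (Fin n → Fin n × Fin n)}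
    (hκ : IsCatalyst G κ) {i j : Fin n} (hij : G.Adj i j)
    (hi : s((κ.2 i).1, (κ.2 i).2) ≠ s(i, j)) (hj : s((κ.2 j).1, (κ.2 j).2) ≠ s(i, j)) :
    IsCatalyst G (κ.1 * Equiv.swap i j, κ.2 ∘ Equiv.swap i j) := by
  intro k
  simp only [Equiv.Perm.mul_apply, Function.comp_apply]
  rcases eq_or_ne k i with rfl | hki
  · rw [Equiv.swap_apply_left]
    exact hG.isStep_of_adj hij hj (hκ j)
  rcases eq_or_ne k j with rfl | hkj
  · rw [Equiv.swap_apply_right]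
    exact hG.isStep_of_adj hij.symm (fun h => hi (h.trans Sym2.eq_swap)) (hκ i)
  · rw [Equiv.swap_apply_of_ne_of_ne hki hkj]
    exact hκ k

theorem mul_swap_mem_classOf (hG : G.IsAcyclic) {A : Multiset (Fin n × Fin n)} {i j : Fin n}
    (hij : G.Adj i j) (hmiss : ∀ a ∈ A, s(a.1, a.2) ≠ s(i, j))
    {κ : Equiv.Perm (Fin n) × (Fin n → Fin n × Fin n)} (hκ : κ ∈ classOf G A) :
    (κ.1 * Equiv.swap i j, κ.2 ∘ Equiv.swap i j) ∈ classOf G A := by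
  obtain ⟨hcat, rfl⟩ := hκ
  exact ⟨hcat.mul_swap hG hij (hmiss _ (mem_flowOf _ i)) (hmiss _ (mem_flowOf _ j)),
    flowOf_comp_perm _ _⟩

end Catalyst

theorem disconnected_zero_sum_involution_general {n : ℕ}
    (G : SimpleGraph (Fin n)) (hG : G.IsTree)
    (A : Multiset (Fin n × Fin n))
    (i j : Fin n) (hij : G.Adj i j)
    (hmiss : ∀ a ∈ A, s(a.1, a.2) ≠ s(i, j)) :
    (∀ κ ∈ classOf G A,
        (κ.1 * Equiv.swap i j, κ.2 ∘ Equiv.swap i j) ∈ classOf G A) ∧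
    (∀ κ : Equiv.Perm (Fin n) × (Fin n → Fin n × Fin n),
        ((κ.1 * Equiv.swap i j) * Equiv.swap i j,
          (κ.2 ∘ Equiv.swap i j) ∘ Equiv.swap i j) = κ) ∧
    (∀ κ : Equiv.Perm (Fin n) × (Fin n → Fin n × Fin n),
        Equiv.Perm.sign (κ.1 * Equiv.swap i j) = - Equiv.Perm.sign κ.1) ∧
    (∀ κ ∈ classOf G A, (κ.1 * Equiv.swap i j, κ.2 ∘ Equiv.swap i j) ≠ κ) ∧
    ∑ κ : {κ // κ ∈ classOf G A}, (Equiv.Perm.sign κ.1.1 : ℤ) = 0 := by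
  have hmem := fun κ (hκ : κ ∈ classOf G A) => mul_swap_mem_classOf hG.isAcyclic hij hmiss hκ
  have hinv : ∀ κ : Equiv.Perm (Fin n) × (Fin n → Fin n × Fin n),
      ((κ.1 * Equiv.swap i j) * Equiv.swap i j,
        (κ.2 ∘ Equiv.swap i j) ∘ Equiv.swap i j) = κ := fun κ => by
    ext1
    · simp [mul_assoc]
    · funext k
      simp
  have hsign : ∀ κ : Equiv.Perm (Fin n) × (Fin n → Fin n × Fin n),
      Equiv.Perm.sign (κ.1 * Equiv.swap i j) = - Equiv.Perm.sign κ.1 := fun κ => by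
    rw [Equiv.Perm.sign_mul, Equiv.Perm.sign_swap hij.ne, mul_neg_one]
  have hfix : ∀ κ ∈ classOf G A, (κ.1 * Equiv.swap i j, κ.2 ∘ Equiv.swap i j) ≠ κ :=
    fun κ _ h => hij.ne (Equiv.swap_eq_one_iff.mp (mul_eq_left.mp (congrArg Prod.fst h)))
  refine ⟨hmem, hinv, hsign, hfix, Finset.sum_involution
    (fun κ _ => ⟨(κ.1.1 * Equiv.swap i j, κ.1.2 ∘ Equiv.swap i j), hmem _ κ.2⟩)
    (fun κ _ => by simp [hsign]) (fun κ _ _ => Subtype.coe_ne_coe.mp (hfix κ.1 κ.2))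
    (fun _ _ => Finset.mem_univ _) (fun κ _ => Subtype.ext (hinv κ.1))⟩

/-- For a disconnected zero-sum arrowflow `A` (some edge `{i,j}` of the tree carries no
arc of `A`), the map `(σ, f) ↦ (σ∘(i j), f∘(i j))` is a well-defined sign-reversing
involution of `C(A)` without fixed points; consequently the signed sum over `C(A)`
vanishes. -/
theorem disconnected_zero_sum_involution {n : ℕ}
    (G : SimpleGraph (Fin n)) (hG : G.IsTree)
    (A : Multiset (Fin n × Fin n))
    (hcard : Multiset.card A = n)
    (harc : ∀ a ∈ A, G.Adj a.1 a.2)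
    (i j : Fin n) (hij : G.Adj i j)
    (hmiss : ∀ a ∈ A, s(a.1, a.2) ≠ s(i, j)) :
    (∀ κ ∈ classOf G A,
        (κ.1 * Equiv.swap i j, κ.2 ∘ Equiv.swap i j) ∈ classOf G A) ∧
    (∀ κ : Equiv.Perm (Fin n) × (Fin n → Fin n × Fin n),
        ((κ.1 * Equiv.swap i j) * Equiv.swap i j,
          (κ.2 ∘ Equiv.swap i j) ∘ Equiv.swap i j) = κ) ∧
    (∀ κ : Equiv.Perm (Fin n) × (Fin n → Fin n × Fin n),
        Equiv.Perm.sign (κ.1 * Equiv.swap i j) = - Equiv.Perm.sign κ.1) ∧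
    (∀ κ ∈ classOf G A, (κ.1 * Equiv.swap i j, κ.2 ∘ Equiv.swap i j) ≠ κ) ∧
    ∑ κ : {κ // κ ∈ classOf G A}, (Equiv.Perm.sign κ.1.1 : ℤ) = 0 :=
  disconnected_zero_sum_involution_general G hG A i j hij hmiss
end

section
/- Let A be a connected zero-sum arrowflow on a tree T, with (a,b) the unique arc of multiplicity 2 in A. For any catalyst (σ, f) ∈ C(A), letting i and j be the two vertices with f(i) = f(j) = (a,b), the arc (a,b) is a step of both P(i, σ(j)) and P(j, σ(i)); hence (σ∘(i j), f) is again a catalyst in C(A), and the resulting map is a sign-reversing fixed-point-free involution on C(A), so Σ_{κ ∈ C(A)} sign(κ) = 0. -/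
open scoped Classical

/-!
In a forest, `(a, b)` is a step of `P(k, m)` exactly when, after deleting the edge `{a, b}`, `k`
lies on the side of `a` and `m` on the side of `b`. Hence if `f i = f j = (a, b)` is a step of both
`P(i, σ i)` and `P(j, σ j)`, it is also a step of `P(i, σ j)` and `P(j, σ i)`, and
`(σ ∘ (i j), f)` is a catalyst with the same arrowflow. Since `(a, b)` has multiplicity 2, the
pair `{i, j}` is determined by `f`, which the swap does not change; so this is a fixed-point-free
involution of `C(A)` reversing the sign of `σ`.
-/

open SimpleGraph Equiv Finset

section Steps

variable {V : Type*} {G : SimpleGraph V} {k m k' m' a b : V}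

lemma IsStep.adj (h : IsStep G k m a b) : G.Adj a b := by
  obtain ⟨-, -, ⟨_, hadj⟩, -, rfl⟩ := h
  exact hadj

lemma IsStep.reachable_deleteEdges (h : IsStep G k m a b) :
    (G.deleteEdges {s(a, b)}).Reachable k a ∧ (G.deleteEdges {s(a, b)}).Reachable b m := by
  obtain ⟨p, hp, ⟨⟨a', b'⟩, hab⟩, hd, hd'⟩ := h
  obtain ⟨rfl, rfl⟩ := Prod.mk.inj hd'
  obtain ⟨q, r, rfl⟩ := (Walk.isSubwalk_toWalk_adj_iff_mem_darts p).2 hd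
  have hnodup : (q.edges ++ s(a', b') :: r.edges).Nodup := by
    simpa [Adj.toWalk] using hp.isTrail.edges_nodup
  rw [List.nodup_append, List.nodup_cons] at hnodup
  simp only [reachable_deleteEdges_iff_exists_walk]
  exact ⟨⟨q, fun h => hnodup.2.2 _ h _ List.mem_cons_self rfl⟩, ⟨r, hnodup.2.1.1⟩⟩

/-- `{a, b}` is a bridge of the forest, so the two sides never meet and the joined walk is
a path. -/
lemma isStep_of_reachable_deleteEdges (hG : G.IsAcyclic) (hab : G.Adj a b)
    (hk : (G.deleteEdges {s(a, b)}).Reachable k a)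
    (hm : (G.deleteEdges {s(a, b)}).Reachable b m) : IsStep G k m a b := by
  obtain ⟨q, hq⟩ := hk.exists_isPath
  obtain ⟨r, hr⟩ := hm.exists_isPath
  have hle := G.deleteEdges_le {s(a, b)}
  refine ⟨(q.mapLe hle).append (.cons hab (r.mapLe hle)), ?_, ⟨(a, b), hab⟩, by simp, rfl⟩
  rw [Walk.isPath_def, Walk.support_append, Walk.support_cons, List.tail_cons,
    Walk.support_mapLe_eq_support, Walk.support_mapLe_eq_support]
  refine hq.support_nodup.append hr.support_nodup fun v hvq hvr => isBridge_iff.1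
    (isAcyclic_iff_forall_adj_isBridge.1 hG hab) ?_
  exact Reachable.trans (q.dropUntil v hvq).reachable.symm (r.takeUntil v hvr).reachable.symm

lemma IsStep.exchange (hG : G.IsAcyclic) (h : IsStep G k m a b) (h' : IsStep G k' m' a b) :
    IsStep G k m' a b :=
  isStep_of_reachable_deleteEdges hG h.adj h.reachable_deleteEdges.1 h'.reachable_deleteEdges.2

end Steps

lemma IsCatalyst.mul_swap_s7 {n : ℕ} {G : SimpleGraph (Fin n)} (hG : G.IsAcyclic)
    {σ : Perm (Fin n)} {f : Fin n → Fin n × Fin n} (hκ : IsCatalyst G (σ, f)) {i j : Fin n}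
    (hij : f i = f j) : IsCatalyst G (σ * swap i j, f) := by
  have hi : IsStep G i (σ i) (f j).1 (f j).2 := hij ▸ hκ i
  have hj : IsStep G j (σ j) (f i).1 (f i).2 := hij ▸ hκ j
  intro k
  simp only [Perm.mul_apply]
  rcases eq_or_ne k i with rfl | hki
  · rw [swap_apply_left]
    exact (hκ k).exchange hG hj
  rcases eq_or_ne k j with rfl | hkj
  · rw [swap_apply_right]
    exact (hκ k).exchange hG hi
  · rw [swap_apply_of_ne_of_ne hki hkj]
    exact hκ k

lemma count_flowOf {n : ℕ} (f : Fin n → Fin n × Fin n) (c : Fin n × Fin n) :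
    (flowOf f).count c = #{k | f k = c} := by
  simp only [flowOf, Multiset.count_map, eq_comm]
  rfl

/-- The involution swaps the two points of the fibre of `c`; it is well defined because it does
not change the second component, which determines that fibre. -/
lemma sum_sign_eq_zero_of_mul_swap_mem {ι β : Type*} [Fintype ι] [DecidableEq ι]
    [DecidableEq β] (C : Set (Perm ι × (ι → β))) [Fintype C] (c : β)
    (hfibre : ∀ κ ∈ C, #{k | κ.2 k = c} = 2)
    (hswap : ∀ κ ∈ C, ∀ i j, i ≠ j → κ.2 i = c → κ.2 j = c →
      (κ.1 * swap i j, κ.2) ∈ C) :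
    ∑ κ : C, (Perm.sign κ.1.1 : ℤ) = 0 := by
  have hpair : ∀ f : ι → β, #{k | f k = c} = 2 →
      ∃ ij : ι × ι, ij.1 ≠ ij.2 ∧ f ij.1 = c ∧ f ij.2 = c := by
    intro f hf
    obtain ⟨i, j, hij, hs⟩ := card_eq_two.1 hf
    have hi : i ∈ ({k | f k = c} : Finset ι) := hs ▸ mem_insert_self i {j}
    have hj : j ∈ ({k | f k = c} : Finset ι) := hs ▸ mem_insert_of_mem (mem_singleton_self j)
    exact ⟨(i, j), hij, (mem_filter.1 hi).2, (mem_filter.1 hj).2⟩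
  choose pair hne hfst hsnd using hpair
  refine sum_involution (fun κ _ => ⟨(κ.1.1 * swap (pair κ.1.2 (hfibre _ κ.2)).1
    (pair κ.1.2 (hfibre _ κ.2)).2, κ.1.2), hswap _ κ.2 _ _ (hne _ _) (hfst _ _) (hsnd _ _)⟩)
    ?_ ?_ (fun _ _ => mem_univ _) ?_
  · intro κ _
    simp [Perm.sign_swap (hne _ _)]
  · intro κ _ _ h
    have h₁ := congrArg (fun κ' : C => κ'.1.1) h
    simp only [mul_eq_left, swap_eq_one_iff] at h₁
    exact hne _ _ h₁
  · intro κ _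
    ext : 2 <;> simp [mul_assoc]

theorem connected_zero_sum_involution_general {n : ℕ}
    (G : SimpleGraph (Fin n)) (hG : G.IsTree)
    (A : Multiset (Fin n × Fin n))
    (a b : Fin n)
    (hmult : A.count (a, b) = 2) :
    (∀ κ ∈ classOf G A, ∀ i j : Fin n, i ≠ j →
        κ.2 i = (a, b) → κ.2 j = (a, b) →
        IsStep G i (κ.1 j) a b ∧ IsStep G j (κ.1 i) a b ∧
        (κ.1 * Equiv.swap i j, κ.2) ∈ classOf G A ∧
        Equiv.Perm.sign (κ.1 * Equiv.swap i j) = - Equiv.Perm.sign κ.1 ∧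
        (κ.1 * Equiv.swap i j, κ.2) ≠ κ ∧
        ((κ.1 * Equiv.swap i j) * Equiv.swap i j, κ.2) = κ) ∧
    ∑ κ : {κ // κ ∈ classOf G A}, (Equiv.Perm.sign κ.1.1 : ℤ) = 0 := by
  refine ⟨?_, sum_sign_eq_zero_of_mul_swap_mem _ (a, b)
    (fun κ hκ => by rw [← count_flowOf, hκ.2, hmult])
    fun κ hκ i j _ hi hj => ⟨hκ.1.mul_swap_s7 hG.isAcyclic (hi.trans hj.symm), hκ.2⟩⟩
  rintro ⟨σ, f⟩ ⟨hκ, hflow⟩ i j hij (hi : f i = (a, b)) (hj : f j = (a, b))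
  have hstep_i : IsStep G i (σ i) a b := by simpa [hi] using hκ i
  have hstep_j : IsStep G j (σ j) a b := by simpa [hj] using hκ j
  exact ⟨hstep_i.exchange hG.isAcyclic hstep_j, hstep_j.exchange hG.isAcyclic hstep_i,
    ⟨hκ.mul_swap_s7 hG.isAcyclic (hi.trans hj.symm), hflow⟩, by simp [Perm.sign_swap hij],
    by simpa using hij, by simp [mul_assoc]⟩

/-- For a connected zero-sum arrowflow `A` with repeated arc `(a,b)` of multiplicity 2:
for any catalyst `(σ, f) ∈ C(A)` and the two vertices `i ≠ j` with
`f i = f j = (a,b)`, the arc `(a,b)` is a step of both `P(i, σ j)` and `P(j, σ i)`,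
so `(σ∘(i j), f)` is again a catalyst in `C(A)`; the resulting map is a sign-reversing
fixed-point-free involution, whence the signed sum over `C(A)` vanishes. -/
theorem connected_zero_sum_involution {n : ℕ}
    (G : SimpleGraph (Fin n)) (hG : G.IsTree)
    (A : Multiset (Fin n × Fin n))
    (hcard : Multiset.card A = n)
    (harc : ∀ c ∈ A, G.Adj c.1 c.2)
    (hconn : ∀ e ∈ G.edgeSet, ∃ c ∈ A, s(c.1, c.2) = e)
    (a b : Fin n) (hab : G.Adj a b)
    (hmult : A.count (a, b) = 2) :
    (∀ κ ∈ classOf G A, ∀ i j : Fin n, i ≠ j →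
        κ.2 i = (a, b) → κ.2 j = (a, b) →
        IsStep G i (κ.1 j) a b ∧ IsStep G j (κ.1 i) a b ∧
        (κ.1 * Equiv.swap i j, κ.2) ∈ classOf G A ∧
        Equiv.Perm.sign (κ.1 * Equiv.swap i j) = - Equiv.Perm.sign κ.1 ∧
        (κ.1 * Equiv.swap i j, κ.2) ≠ κ ∧
        ((κ.1 * Equiv.swap i j) * Equiv.swap i j, κ.2) = κ) ∧
    ∑ κ : {κ // κ ∈ classOf G A}, (Equiv.Perm.sign κ.1.1 : ℤ) = 0 :=
  connected_zero_sum_involution_general G hG A a b hmult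
end

section
/- In a directed graph obtained as the union Γ(i)⁺ ∪ Γ(i)⁻ of two directed path-trees structured as in the hemisphere construction (with a height function h assigning to each node a rational height such that every arc of Γ(i)⁺ strictly increases h and every arc of Γ(i)⁻ strictly decreases h, and such that the head of an increasing arc is never the tail of a decreasing arc and vice versa), there is at most one directed walk between any two nodes. -/
/-- `UniqueWalks R` : in the digraph with arc relation `R`, between any two nodes
there is at most one directed walk (walks are nonempty lists of nodes chained by `R`). -/
def UniqueWalks {V : Type*} (R : V → V → Prop) : Prop :=
  ∀ (x y : V) (l₁ l₂ : List V),
    l₁.Chain' R → l₂.Chain' R →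
    l₁.head? = some x → l₂.head? = some x →
    l₁.getLast? = some y → l₂.getLast? = some y →
    l₁ = l₂

/-! A walk in `Γ⁺ ∪ Γ⁻` cannot switch between the two trees, since a switch would be two
composable arcs from different trees; so every walk lies in one tree. Two walks between the same
endpoints in the same tree coincide. A walk in `Γ⁺` and a walk in `Γ⁻` between the
same endpoints cannot both be nontrivial, since `h` would both rise and fall from start to end;
if one is trivial its endpoints agree, which forces the other to be trivial as well. -/

namespace List.IsChain

variable {α : Type*} {R S : α → α → Prop}

theorem of_or_of_rel_head (hRS : ∀ x y z, R x y → S y z → False) {a b : α} {t : List α}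
    (hl : (a :: b :: t).IsChain fun x y => R x y ∨ S x y) (hab : R a b) :
    (a :: b :: t).IsChain R := by
  induction t generalizing a b with
  | nil => exact isChain_pair.mpr hab
  | cons c t ih =>
    obtain ⟨-, hl⟩ := isChain_cons_cons.mp hl
    have hbc : R b c := (isChain_cons_cons.mp hl).1.resolve_right (hRS a b c hab)
    exact (ih hl hbc).cons_cons hab

theorem or_of_or (hRS : ∀ x y z, R x y → S y z → False) (hSR : ∀ x y z, S x y → R y z → False)
    {l : List α} (hl : l.IsChain fun x y => R x y ∨ S x y) : l.IsChain R ∨ l.IsChain S := by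
  match l with
  | [] => exact .inl .nil
  | [_] => exact .inl (.singleton _)
  | a :: b :: t =>
    rcases (isChain_cons_cons.mp hl).1 with hab | hab
    · exact .inl (of_or_of_rel_head hRS hl hab)
    · exact .inr (of_or_of_rel_head hSR (hl.imp fun _ _ => Or.symm) hab)

theorem eq_singleton_or_lt {β : Type*} [Preorder β] {f : α → β} {l : List α} {x y : α}
    (hl : l.IsChain fun a b => f a < f b) (hx : l.head? = some x) (hy : l.getLast? = some y) :
    l = [x] ∨ f x < f y := by
  match l, hx with
  | [_], rfl => exact .inl rfl
  | x :: b :: t, rfl =>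
    rw [getLast?_cons_cons] at hy
    exact .inr (((isChain_map f).mpr hl).rel_cons (mem_map_of_mem (mem_of_getLast? hy)))

theorem eq_of_lt_of_gt {β : Type*} [Preorder β] {f : α → β} {l₁ l₂ : List α} {x y : α}
    (h₁ : l₁.IsChain fun a b => f a < f b) (h₂ : l₂.IsChain fun a b => f b < f a)
    (hx₁ : l₁.head? = some x) (hx₂ : l₂.head? = some x)
    (hy₁ : l₁.getLast? = some y) (hy₂ : l₂.getLast? = some y) : l₁ = l₂ := by
  rcases h₁.eq_singleton_or_lt hx₁ hy₁ with rfl | hlt₁ <;>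
    rcases eq_singleton_or_lt (f := OrderDual.toDual ∘ f) h₂ hx₂ hy₂ with rfl | hlt₂
  · rfl
  · obtain rfl : x = y := by simpa using hy₁
    exact (lt_irrefl _ hlt₂).elim
  · obtain rfl : x = y := by simpa using hy₂
    exact (lt_irrefl _ hlt₁).elim
  · exact (lt_asymm hlt₁ hlt₂).elim

end List.IsChain

/-- In the union of two directed trees `Γ⁺` and `Γ⁻`, where a height function strictly
increases along arcs of `Γ⁺` and strictly decreases along arcs of `Γ⁻`, and where any
two composable arcs lie in the same part, there is at most one directed walk between
any two nodes. -/
theorem uniqueWalks_union {V : Type*} (Rp Rm : V → V → Prop) (h : V → ℚ)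
    (hup : ∀ x y, Rp x y → h x < h y)
    (hdn : ∀ x y, Rm x y → h y < h x)
    (hcomp₁ : ∀ x y z, Rp x y → Rm y z → False)
    (hcomp₂ : ∀ x y z, Rm x y → Rp y z → False)
    (hRp : UniqueWalks Rp) (hRm : UniqueWalks Rm) :
    UniqueWalks (fun x y => Rp x y ∨ Rm x y) := by
  intro x y l₁ l₂ hl₁ hl₂ hx₁ hx₂ hy₁ hy₂
  have up {l : List V} (hl : l.IsChain Rp) : l.IsChain fun a b => h a < h b := hl.imp hup
  have down {l : List V} (hl : l.IsChain Rm) : l.IsChain fun a b => h b < h a := hl.imp hdn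
  rcases hl₁.or_of_or hcomp₁ hcomp₂ with hp₁ | hm₁ <;>
    rcases hl₂.or_of_or hcomp₁ hcomp₂ with hp₂ | hm₂
  · exact hRp x y l₁ l₂ hp₁ hp₂ hx₁ hx₂ hy₁ hy₂
  · exact List.IsChain.eq_of_lt_of_gt (up hp₁) (down hm₂) hx₁ hx₂ hy₁ hy₂
  · exact (List.IsChain.eq_of_lt_of_gt (up hp₂) (down hm₁) hx₂ hx₁ hy₂ hy₁).symm
  · exact hRm x y l₁ l₂ hm₁ hm₂ hx₁ hx₂ hy₁ hy₂
end

section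
/- Let N be an acyclic n-network in which no node is simultaneously a source and a sink, and let E be a set of arcs of N. Then there exists at most one non-intersecting family of n paths in N whose multiset of steps equals E; moreover, if such a family exists, then every source has out-degree 1 and in-degree 0 in E, every sink has out-degree 0 and in-degree 1 in E, and every other node has degree pair (1,1) or (0,0) in E. -/
variable {V : Type*}

/-- A (directed) path in the digraph with arc relation `R`, as a nonempty list of
pairwise distinct nodes chained by `R`. -/
def IsPathList (R : V → V → Prop) (l : List V) : Prop :=
  l ≠ [] ∧ l.Chain' R ∧ l.Nodup

/-- `IsFamily R src snk F σ` : `F` is a family of `n` paths, the `i`-th going from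
source `src i` to sink `snk (σ i)`. -/
def IsFamily {n : ℕ} (R : V → V → Prop) (src snk : Fin n → V)
    (F : Fin n → List V) (σ : Equiv.Perm (Fin n)) : Prop :=
  ∀ i, IsPathList R (F i) ∧ (F i).head? = some (src i) ∧
    (F i).getLast? = some (snk (σ i))

/-- A family of paths is non-intersecting when no node belongs to two of its paths. -/
def NonIntersecting {n : ℕ} (F : Fin n → List V) : Prop :=
  ∀ i j, i ≠ j → ∀ v ∈ F i, v ∉ F j

/-- The multiset of steps of a family of paths. -/
def stepsOfFam {n : ℕ} (F : Fin n → List V) : Multiset (V × V) :=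
  ∑ i : Fin n, (((F i).zip (F i).tail : List (V × V)) : Multiset (V × V))

/-! The paths of a non-intersecting family are simple and pairwise disjoint, so a node lying on
path `i` is the tail of exactly one step unless it ends that path, and the head of exactly one
step unless it starts it; a node on no path meets no step. This gives the degree pairs. In
particular every node has out-degree at most one in `E`, so `E` is the graph of a partial
successor function under which the sinks have no successor: each path is recovered from `E` by
starting at its source and following successors until they run out. -/

namespace List

theorem map_fst_zip_tail (l : List V) : (l.zip l.tail).map Prod.fst = l.dropLast := by
  induction l using twoStepInduction <;> simp_all

theorem map_snd_zip_tail (l : List V) : (l.zip l.tail).map Prod.snd = l.tail :=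
  map_snd_zip (by simp)

theorem isChain_of_forall_mem_zip_tail {R : V → V → Prop} {l : List V}
    (h : ∀ p ∈ l.zip l.tail, R p.1 p.2) : l.IsChain R := by
  induction l using twoStepInduction <;> simp_all

theorem Nodup.count_dropLast_of_mem [DecidableEq V] {l : List V} (hl : l.Nodup) {z b : V}
    (hz : z ∈ l) (hb : l.getLast? = some b) : l.dropLast.count z = if z = b then 0 else 1 := by
  have h := congrArg (List.count z) (dropLast_append_getLast? b hb)
  rw [count_append, count_singleton', count_eq_one_of_mem hl hz] at h
  split_ifs at h ⊢ <;> grind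

theorem Nodup.count_tail_of_mem [DecidableEq V] {l : List V} (hl : l.Nodup) {z a : V}
    (hz : z ∈ l) (ha : l.head? = some a) : l.tail.count z = if z = a then 0 else 1 := by
  obtain ⟨t, rfl⟩ := head?_eq_some_iff.mp ha
  have h := count_eq_one_of_mem hl hz
  rw [count_cons] at h
  split_ifs at h ⊢ <;> grind

theorem IsChain.eq_of_head?_eq {R : V → V → Prop} {l₁ l₂ : List V} (h₁ : l₁.IsChain R)
    (h₂ : l₂.IsChain R) (hR : ∀ a b c, R a b → R a c → b = c) (hhead : l₁.head? = l₂.head?)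
    (hlast₁ : ∀ a ∈ l₁.getLast?, ∀ b, ¬ R a b) (hlast₂ : ∀ a ∈ l₂.getLast?, ∀ b, ¬ R a b) :
    l₁ = l₂ := by
  induction l₁ generalizing l₂ with
  | nil => exact (head?_eq_none_iff.mp hhead.symm).symm
  | cons a t ih =>
    obtain ⟨t₂, rfl⟩ := head?_eq_some_iff.mp hhead.symm
    match t, t₂ with
    | [], [] => rfl
    | [], b :: _ => exact absurd (isChain_cons_cons.mp h₂).1 (hlast₁ a rfl b)
    | b :: _, [] => exact absurd (isChain_cons_cons.mp h₁).1 (hlast₂ a rfl b)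
    | b :: t₁, c :: t₂ =>
      obtain ⟨hab, h₁⟩ := isChain_cons_cons.mp h₁
      obtain ⟨hac, h₂⟩ := isChain_cons_cons.mp h₂
      obtain rfl := hR a b c hab hac
      rw [getLast?_cons_cons] at hlast₁ hlast₂
      rw [ih h₁ h₂ rfl hlast₁ hlast₂]

end List

theorem Multiset.eq_of_countP_le_one {α : Type*} {p : α → Prop} [DecidablePred p]
    {s : Multiset α} (h : s.countP p ≤ 1) {a b : α} (ha : a ∈ s) (hb : b ∈ s) (hpa : p a)
    (hpb : p b) : a = b := by
  classical
  by_contra hab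
  have hb' : b ∈ s.erase a := mem_erase_of_ne (Ne.symm hab) |>.mpr hb
  have := countP_pos.mpr ⟨b, hb', hpb⟩
  rw [← cons_erase ha, countP_cons_of_pos _ hpa] at h
  omega

theorem Multiset.countP_finset_sum {ι α : Type*} (s : Finset ι) (f : ι → Multiset α)
    (p : α → Prop) [DecidablePred p] : (∑ i ∈ s, f i).countP p = ∑ i ∈ s, (f i).countP p :=
  map_sum (countPAddMonoidHom p) f s

theorem isChain_mem_stepsOfFam {n : ℕ} (F : Fin n → List V) (i : Fin n) :
    (F i).IsChain fun a b => (a, b) ∈ stepsOfFam F :=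
  List.isChain_of_forall_mem_zip_tail fun _ hp =>
    Multiset.mem_sum.mpr ⟨i, Finset.mem_univ _, Multiset.mem_coe.mpr hp⟩

namespace IsFamily

variable {n : ℕ} {R : V → V → Prop} {src snk : Fin n → V} {F : Fin n → List V}
  {σ : Equiv.Perm (Fin n)}

theorem src_mem (hF : IsFamily R src snk F σ) (i : Fin n) : src i ∈ F i :=
  List.mem_of_mem_head? (hF i).2.1

theorem snk_mem (hF : IsFamily R src snk F σ) (i : Fin n) : snk (σ i) ∈ F i :=
  List.mem_of_getLast? (hF i).2.2

end IsFamily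

section Degrees

variable [DecidableEq V]

def outDegree (E : Multiset (V × V)) (z : V) : ℕ := E.countP (fun p => p.1 = z)

def inDegree (E : Multiset (V × V)) (z : V) : ℕ := E.countP (fun p => p.2 = z)

variable {n : ℕ}

theorem outDegree_stepsOfFam (F : Fin n → List V) (z : V) :
    outDegree (stepsOfFam F) z = ∑ i, (F i).dropLast.count z := by
  rw [outDegree, stepsOfFam, Multiset.countP_finset_sum]
  refine Finset.sum_congr rfl fun i _ => ?_
  rw [Multiset.coe_countP, List.count, ← List.map_fst_zip_tail, List.countP_map]
  rfl

theorem inDegree_stepsOfFam (F : Fin n → List V) (z : V) :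
    inDegree (stepsOfFam F) z = ∑ i, (F i).tail.count z := by
  rw [inDegree, stepsOfFam, Multiset.countP_finset_sum]
  refine Finset.sum_congr rfl fun i _ => ?_
  rw [Multiset.coe_countP, List.count]
  conv_rhs => rw [← List.map_snd_zip_tail, List.countP_map]
  rfl

theorem outDegree_stepsOfFam_eq_zero {F : Fin n → List V} {z : V} (hz : ∀ i, z ∉ F i) :
    outDegree (stepsOfFam F) z = 0 := by
  rw [outDegree_stepsOfFam]
  exact Finset.sum_eq_zero fun i _ => List.count_eq_zero_of_not_mem fun h =>
    hz i (List.dropLast_subset _ h)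

theorem inDegree_stepsOfFam_eq_zero {F : Fin n → List V} {z : V} (hz : ∀ i, z ∉ F i) :
    inDegree (stepsOfFam F) z = 0 := by
  rw [inDegree_stepsOfFam]
  exact Finset.sum_eq_zero fun i _ => List.count_eq_zero_of_not_mem fun h =>
    hz i (List.tail_subset _ h)

theorem NonIntersecting.sum_count_eq {F : Fin n → List V} (hNI : NonIntersecting F) {i : Fin n}
    {z : V} (hz : z ∈ F i) (f : List V → List V) (hf : ∀ l, f l ⊆ l) :
    ∑ j, (f (F j)).count z = (f (F i)).count z :=
  Finset.sum_eq_single i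
    (fun j _ hji => List.count_eq_zero_of_not_mem fun h => hNI i j hji.symm z hz (hf _ h))
    (by simp)

variable {R : V → V → Prop} {src snk : Fin n → V} {F : Fin n → List V}
  {σ : Equiv.Perm (Fin n)}

namespace IsFamily

theorem outDegree_of_mem (hF : IsFamily R src snk F σ) (hNI : NonIntersecting F) {i : Fin n}
    {z : V} (hz : z ∈ F i) : outDegree (stepsOfFam F) z = if z = snk (σ i) then 0 else 1 := by
  rw [outDegree_stepsOfFam, hNI.sum_count_eq hz _ List.dropLast_subset]
  exact (hF i).1.2.2.count_dropLast_of_mem hz (hF i).2.2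

theorem inDegree_of_mem (hF : IsFamily R src snk F σ) (hNI : NonIntersecting F) {i : Fin n}
    {z : V} (hz : z ∈ F i) : inDegree (stepsOfFam F) z = if z = src i then 0 else 1 := by
  rw [inDegree_stepsOfFam, hNI.sum_count_eq hz _ List.tail_subset]
  exact (hF i).1.2.2.count_tail_of_mem hz (hF i).2.1

theorem degrees_src (hF : IsFamily R src snk F σ) (hNI : NonIntersecting F)
    (hdisj : ∀ i j, src i ≠ snk j) (i : Fin n) :
    outDegree (stepsOfFam F) (src i) = 1 ∧ inDegree (stepsOfFam F) (src i) = 0 := by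
  rw [hF.outDegree_of_mem hNI (hF.src_mem i), hF.inDegree_of_mem hNI (hF.src_mem i),
    if_neg (hdisj _ _), if_pos rfl]
  exact ⟨rfl, rfl⟩

theorem outDegree_snk (hF : IsFamily R src snk F σ) (hNI : NonIntersecting F) (j : Fin n) :
    outDegree (stepsOfFam F) (snk j) = 0 := by
  obtain ⟨i, rfl⟩ := σ.surjective j
  rw [hF.outDegree_of_mem hNI (hF.snk_mem i), if_pos rfl]

theorem degrees_snk (hF : IsFamily R src snk F σ) (hNI : NonIntersecting F)
    (hdisj : ∀ i j, src i ≠ snk j) (j : Fin n) :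
    outDegree (stepsOfFam F) (snk j) = 0 ∧ inDegree (stepsOfFam F) (snk j) = 1 := by
  refine ⟨hF.outDegree_snk hNI j, ?_⟩
  obtain ⟨i, rfl⟩ := σ.surjective j
  rw [hF.inDegree_of_mem hNI (hF.snk_mem i), if_neg (hdisj _ _).symm]

theorem degrees_of_ne (hF : IsFamily R src snk F σ) (hNI : NonIntersecting F) {z : V}
    (hsrc : ∀ i, src i ≠ z) (hsnk : ∀ j, snk j ≠ z) :
    (outDegree (stepsOfFam F) z = 1 ∧ inDegree (stepsOfFam F) z = 1) ∨
      (outDegree (stepsOfFam F) z = 0 ∧ inDegree (stepsOfFam F) z = 0) := by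
  by_cases hz : ∃ i, z ∈ F i
  · obtain ⟨i, hz⟩ := hz
    left
    rw [hF.outDegree_of_mem hNI hz, hF.inDegree_of_mem hNI hz, if_neg (hsnk _).symm,
      if_neg (hsrc _).symm]
    exact ⟨rfl, rfl⟩
  · exact .inr ⟨outDegree_stepsOfFam_eq_zero (not_exists.mp hz),
      inDegree_stepsOfFam_eq_zero (not_exists.mp hz)⟩

theorem outDegree_le_one (hF : IsFamily R src snk F σ) (hNI : NonIntersecting F) (z : V) :
    outDegree (stepsOfFam F) z ≤ 1 := by
  by_cases hz : ∃ i, z ∈ F i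
  · obtain ⟨i, hz⟩ := hz
    rw [hF.outDegree_of_mem hNI hz]
    split <;> omega
  · rw [outDegree_stepsOfFam_eq_zero (not_exists.mp hz)]
    exact zero_le_one

theorem snd_eq_of_mem_stepsOfFam (hF : IsFamily R src snk F σ) (hNI : NonIntersecting F)
    {z w₁ w₂ : V} (h₁ : (z, w₁) ∈ stepsOfFam F) (h₂ : (z, w₂) ∈ stepsOfFam F) : w₁ = w₂ :=
  (Prod.mk.inj (Multiset.eq_of_countP_le_one (hF.outDegree_le_one hNI z) h₁ h₂ rfl rfl)).2

theorem eq_of_stepsOfFam_eq {F₁ F₂ : Fin n → List V} {σ₁ σ₂ : Equiv.Perm (Fin n)}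
    (hF₁ : IsFamily R src snk F₁ σ₁) (hNI₁ : NonIntersecting F₁) (hF₂ : IsFamily R src snk F₂ σ₂)
    (hE : stepsOfFam F₁ = stepsOfFam F₂) : F₁ = F₂ := by
  have hlast : ∀ {F : Fin n → List V} {σ : Equiv.Perm (Fin n)}, IsFamily R src snk F σ →
      ∀ i, ∀ a ∈ (F i).getLast?, ∀ w, (a, w) ∉ stepsOfFam F₁ := by
    intro F σ hF i a ha w hw
    rw [(hF i).2.2, Option.mem_some_iff] at ha
    subst ha
    exact Multiset.countP_eq_zero.mp (hF₁.outDegree_snk hNI₁ _) _ hw rfl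
  funext i
  exact (isChain_mem_stepsOfFam F₁ i).eq_of_head?_eq (hE ▸ isChain_mem_stepsOfFam F₂ i)
    (fun _ _ _ => hF₁.snd_eq_of_mem_stepsOfFam hNI₁) (by rw [(hF₁ i).2.1, (hF₂ i).2.1])
    (hlast hF₁ i) (hlast hF₂ i)

end IsFamily

end Degrees

theorem nonintersecting_family_unique_steps_general [DecidableEq V] {n : ℕ}
    (R : V → V → Prop)
    (src snk : Fin n → V)
    (hdisj : ∀ i j, src i ≠ snk j)
    (E : Multiset (V × V)) :
    (∀ (F₁ F₂ : Fin n → List V) (σ₁ σ₂ : Equiv.Perm (Fin n)),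
        IsFamily R src snk F₁ σ₁ → NonIntersecting F₁ → stepsOfFam F₁ = E →
        IsFamily R src snk F₂ σ₂ → NonIntersecting F₂ → stepsOfFam F₂ = E →
        F₁ = F₂) ∧
    (∀ (F : Fin n → List V) (σ : Equiv.Perm (Fin n)),
        IsFamily R src snk F σ → NonIntersecting F → stepsOfFam F = E →
        ∀ z : V,
          ((∃ i, src i = z) →
            E.countP (fun p => p.1 = z) = 1 ∧ E.countP (fun p => p.2 = z) = 0) ∧
          ((∃ i, snk i = z) →
            E.countP (fun p => p.1 = z) = 0 ∧ E.countP (fun p => p.2 = z) = 1) ∧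
          ((¬ ∃ i, src i = z) → (¬ ∃ i, snk i = z) →
            (E.countP (fun p => p.1 = z) = 1 ∧ E.countP (fun p => p.2 = z) = 1) ∨
            (E.countP (fun p => p.1 = z) = 0 ∧ E.countP (fun p => p.2 = z) = 0))) := by
  refine ⟨fun F₁ F₂ σ₁ σ₂ hF₁ hNI₁ hE₁ hF₂ _ hE₂ =>
    hF₁.eq_of_stepsOfFam_eq hNI₁ hF₂ (hE₁.trans hE₂.symm), ?_⟩
  rintro F σ hF hNI rfl z
  refine ⟨?_, ?_, fun hsrc hsnk => hF.degrees_of_ne hNI (not_exists.mp hsrc) (not_exists.mp hsnk)⟩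
  · rintro ⟨i, rfl⟩
    exact hF.degrees_src hNI hdisj i
  · rintro ⟨j, rfl⟩
    exact hF.degrees_snk hNI hdisj j

/-- In an acyclic `n`-network in which no node is both a source and a sink, at most one
non-intersecting family of `n` paths has a given multiset of steps `E`; and for such a
family, every source has degree pair `(1,0)` in `E`, every sink `(0,1)`, and every
other node `(1,1)` or `(0,0)`. -/
theorem nonintersecting_family_unique_steps [Fintype V] [DecidableEq V] {n : ℕ}
    (R : V → V → Prop)
    (hacyc : ∀ (x : V) (l : List V), l ≠ [] → List.Chain R x l → l.getLast? ≠ some x)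
    (src snk : Fin n → V)
    (hsrc : Function.Injective src) (hsnk : Function.Injective snk)
    (hdisj : ∀ i j, src i ≠ snk j)
    (E : Multiset (V × V)) :
    (∀ (F₁ F₂ : Fin n → List V) (σ₁ σ₂ : Equiv.Perm (Fin n)),
        IsFamily R src snk F₁ σ₁ → NonIntersecting F₁ → stepsOfFam F₁ = E →
        IsFamily R src snk F₂ σ₂ → NonIntersecting F₂ → stepsOfFam F₂ = E →
        F₁ = F₂) ∧
    (∀ (F : Fin n → List V) (σ : Equiv.Perm (Fin n)),
        IsFamily R src snk F σ → NonIntersecting F → stepsOfFam F = E →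
        ∀ z : V,
          ((∃ i, src i = z) →
            E.countP (fun p => p.1 = z) = 1 ∧ E.countP (fun p => p.2 = z) = 0) ∧
          ((∃ i, snk i = z) →
            E.countP (fun p => p.1 = z) = 0 ∧ E.countP (fun p => p.2 = z) = 1) ∧
          ((¬ ∃ i, src i = z) → (¬ ∃ i, snk i = z) →
            (E.countP (fun p => p.1 = z) = 1 ∧ E.countP (fun p => p.2 = z) = 1) ∨
            (E.countP (fun p => p.1 = z) = 0 ∧ E.countP (fun p => p.2 = z) = 0))) :=
  nonintersecting_family_unique_steps_general R src snk hdisj E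
end

section
/- Lindström–Gessel–Viennot: for any n-network N, the signed sum of all families of n paths equals the signed sum of the non-intersecting families of n paths: Σ_{Λ ∈ P(N)} sign(Λ) = Σ_{Λ ∈ NIP(N)} sign(Λ). Equivalently, there is a sign-reversing involution on families of n paths whose fixed points are exactly the non-intersecting families and which preserves the multiset of steps. -/
variable {V : Type*}

/-!
Among the families with a shared vertex, let `v` be the least vertex lying on two paths and
`i < j` the first and the last path through it. Exchanging the tails of paths `i` and `j` after
`v` composes the permutation with the transposition `(i j)`, hence flips the sign, and by
acyclicity the new walks are again paths. The exchange preserves the multiset of visited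
vertices, hence the shared vertices, `v` and the paths through `v`, so it is an involution, and
the intersecting families cancel in pairs.
-/

open Finset Equiv

theorem finsum_mem_eq_zero_of_involution {α M : Type*} [AddCommGroup M] {s : Set α} {f : α → M}
    (hs : s.Finite) (g : α → α) (hf : ∀ a ∈ s, f a + f (g a) = 0) (hne : ∀ a ∈ s, g a ≠ a)
    (hgs : ∀ a ∈ s, g a ∈ s) (hgg : ∀ a ∈ s, g (g a) = a) : ∑ᶠ a ∈ s, f a = 0 := by
  rw [finsum_mem_eq_finite_toFinset_sum f hs]
  simp only [← hs.mem_toFinset] at hf hne hgs hgg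
  exact sum_involution (fun a _ => g a) hf (fun a ha _ => hne a ha) hgs hgg

theorem List.takeWhile_dropWhile {α : Type*} (p : α → Bool) (l : List α) :
    (l.dropWhile p).takeWhile p = [] := by
  cases h : l.dropWhile p with
  | nil => rfl
  | cons x t =>
    have := List.head_dropWhile_not p (l := l) (by simp [h])
    simp_all

section Splice

variable [DecidableEq V]

theorem List.head?_dropWhile_ne {v : V} {l : List V} (h : v ∈ l) :
    (l.dropWhile (· ≠ v)).head? = some v := by
  induction l with
  | nil => simp at h
  | cons x t ih =>
    by_cases hx : x = v
    · simp [hx]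
    · rw [List.dropWhile_cons_of_pos (by simpa using hx)]
      exact ih (List.mem_cons.mp h |>.resolve_left (Ne.symm hx))

def spliceAt (v : V) (l m : List V) : List V :=
  l.takeWhile (· ≠ v) ++ m.dropWhile (· ≠ v)

@[simp]
theorem spliceAt_self (v : V) (l : List V) : spliceAt v l l = l :=
  List.takeWhile_append_dropWhile

theorem spliceAt_spliceAt (v : V) (l m : List V) :
    spliceAt v (spliceAt v l m) (spliceAt v m l) = l := by
  unfold spliceAt
  rw [List.takeWhile_append_of_pos fun _ => List.mem_takeWhile_imp, List.takeWhile_dropWhile,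
    List.dropWhile_append_of_pos fun _ => List.mem_takeWhile_imp, List.dropWhile_idempotent,
    List.append_nil, List.takeWhile_append_dropWhile]

theorem mem_spliceAt {v : V} (l : List V) {m : List V} (h : v ∈ m) : v ∈ spliceAt v l m :=
  List.mem_append_right _ (List.mem_of_mem_head? (List.head?_dropWhile_ne h))

theorem head?_spliceAt {v : V} {l m : List V} (hl : v ∈ l) (hm : v ∈ m) :
    (spliceAt v l m).head? = l.head? := by
  conv_rhs => rw [← List.takeWhile_append_dropWhile (p := (· ≠ v)) (l := l)]
  rw [spliceAt, List.head?_append, List.head?_append, List.head?_dropWhile_ne hl,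
    List.head?_dropWhile_ne hm]

theorem getLast?_spliceAt {v : V} (l : List V) {m : List V} (hm : v ∈ m) :
    (spliceAt v l m).getLast? = m.getLast? := by
  conv_rhs => rw [← List.takeWhile_append_dropWhile (p := (· ≠ v)) (l := m)]
  obtain ⟨t, ht⟩ := List.head?_eq_some_iff.mp (List.head?_dropWhile_ne hm)
  rw [spliceAt, List.getLast?_append, List.getLast?_append, ht, List.getLast?_cons,
    Option.some_or, Option.some_or]

theorem isChain_spliceAt {R : V → V → Prop} {v : V} {l m : List V} (hl : l.IsChain R)
    (hm : m.IsChain R) (hvl : v ∈ l) (hvm : v ∈ m) : (spliceAt v l m).IsChain R := by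
  rw [← List.takeWhile_append_dropWhile (p := (· ≠ v)) (l := l), List.isChain_append,
    List.head?_dropWhile_ne hvl] at hl
  refine List.IsChain.append hl.1 (hm.suffix (List.dropWhile_suffix _)) ?_
  rw [List.head?_dropWhile_ne hvm]
  exact hl.2.2

end Splice

theorem nodup_of_isChain {R : V → V → Prop}
    (hacyc : ∀ (x : V) (l : List V), l ≠ [] → (x :: l).IsChain R → l.getLast? ≠ some x)
    {l : List V} (hl : l.IsChain R) : l.Nodup := by
  induction l with
  | nil => exact List.nodup_nil
  | cons x l ih =>
    refine List.nodup_cons.mpr ⟨fun hx => ?_, ih hl.tail⟩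
    obtain ⟨l₁, l₂, rfl⟩ := List.append_of_mem hx
    exact hacyc x (l₁ ++ [x]) (by simp) (hl.prefix ⟨l₂, by simp⟩) (by simp)

section Reroute

variable {ι : Type*} [DecidableEq V]

def reroute (F : ι → List V) (τ : Perm ι) (v : V) : ι → List V :=
  fun k => spliceAt v (F k) (F (τ k))

theorem reroute_reroute (F : ι → List V) {τ : Perm ι} (hτ : Function.Involutive τ) (v : V) :
    reroute (reroute F τ v) τ v = F := by
  funext k
  simp only [reroute, hτ k]
  exact spliceAt_spliceAt v (F k) (F (τ k))

variable [Fintype ι]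

def vertices (F : ι → List V) : Multiset V := ∑ k, (F k : Multiset V)

theorem vertices_reroute (F : ι → List V) (τ : Perm ι) (v : V) :
    vertices (reroute F τ v) = vertices F := by
  simp only [vertices, reroute, spliceAt, ← Multiset.coe_add, sum_add_distrib]
  rw [Equiv.sum_comp τ (fun k => ((F k).dropWhile (· ≠ v) : Multiset V)), ← sum_add_distrib]
  simp only [Multiset.coe_add, List.takeWhile_append_dropWhile]

def pathsThrough (F : ι → List V) (u : V) : Finset ι := {k | u ∈ F k}

theorem pathsThrough_reroute {F : ι → List V} {τ : Perm ι} {v : V}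
    (h : ∀ k, τ k ≠ k → v ∈ F k) : pathsThrough (reroute F τ v) v = pathsThrough F v := by
  ext k
  simp only [pathsThrough, mem_filter, mem_univ, true_and]
  change v ∈ spliceAt v (F k) (F (τ k)) ↔ _
  by_cases hk : τ k = k
  · rw [hk, spliceAt_self]
  · exact iff_of_true (mem_spliceAt _ (h (τ k) fun e => hk (τ.injective e))) (h k hk)

-- Counted in `vertices` rather than over paths, so that invariance under `reroute` is immediate;
-- for families of nodup paths the two agree (`mem_sharedVertices`).
def sharedVertices (F : ι → List V) : Finset V :=
  {u ∈ (vertices F).toFinset | 1 < (vertices F).count u}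

theorem sharedVertices_reroute (F : ι → List V) (τ : Perm ι) (v : V) :
    sharedVertices (reroute F τ v) = sharedVertices F := by
  rw [sharedVertices, vertices_reroute, sharedVertices]

theorem pathsThrough_nonempty_of_mem_sharedVertices {F : ι → List V} {u : V}
    (hu : u ∈ sharedVertices F) : (pathsThrough F u).Nonempty := by
  obtain ⟨k, -, hk⟩ := Multiset.mem_sum.mp (Multiset.mem_toFinset.mp (mem_filter.mp hu).1)
  exact ⟨k, by simpa [pathsThrough] using hk⟩

theorem count_vertices {F : ι → List V} (hF : ∀ k, (F k).Nodup) (u : V) :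
    (vertices F).count u = #(pathsThrough F u) := by
  simp only [vertices, Multiset.count_sum', Multiset.coe_count, (hF _).count, sum_boole,
    Nat.cast_id, pathsThrough]

theorem mem_sharedVertices {F : ι → List V} (hF : ∀ k, (F k).Nodup) {u : V} :
    u ∈ sharedVertices F ↔ 1 < #(pathsThrough F u) := by
  rw [sharedVertices, mem_filter, Multiset.mem_toFinset, count_vertices hF, and_iff_right_iff_imp]
  intro hu
  rw [← Multiset.count_pos, count_vertices hF]
  omega

end Reroute

section TailSwap

variable {ι : Type*} [Fintype ι] [LinearOrder V]

noncomputable def pivot (F : ι → List V) (h : (sharedVertices F).Nonempty) : V :=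
  (sharedVertices F).min' h

theorem pathsThrough_pivot_nonempty {F : ι → List V} (h : (sharedVertices F).Nonempty) :
    (pathsThrough F (pivot F h)).Nonempty :=
  pathsThrough_nonempty_of_mem_sharedVertices (min'_mem _ h)

variable [LinearOrder ι]

noncomputable def pivotSwap (F : ι → List V) (h : (sharedVertices F).Nonempty) : Perm ι :=
  swap ((pathsThrough F (pivot F h)).min' (pathsThrough_pivot_nonempty h))
    ((pathsThrough F (pivot F h)).max' (pathsThrough_pivot_nonempty h))

theorem pivot_mem_of_pivotSwap_ne {F : ι → List V} (h : (sharedVertices F).Nonempty) {k : ι}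
    (hk : pivotSwap F h k ≠ k) : pivot F h ∈ F k := by
  have hk' : k ∈ pathsThrough F (pivot F h) := by
    by_contra hk'
    exact hk (swap_apply_of_ne_of_ne (fun e => hk' (e ▸ min'_mem _ _))
      (fun e => hk' (e ▸ max'_mem _ _)))
  simpa [pathsThrough] using hk'

theorem sign_pivotSwap {F : ι → List V} (hF : ∀ k, (F k).Nodup)
    (h : (sharedVertices F).Nonempty) : Perm.sign (pivotSwap F h) = -1 :=
  Perm.sign_swap (min'_lt_max'_of_card _ ((mem_sharedVertices hF).mp (min'_mem _ h))).ne

noncomputable def tailSwap (p : (ι → List V) × Perm ι) : (ι → List V) × Perm ι :=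
  if h : (sharedVertices p.1).Nonempty then
    (reroute p.1 (pivotSwap p.1 h) (pivot p.1 h), p.2 * pivotSwap p.1 h)
  else p

theorem tailSwap_of_nonempty {F : ι → List V} (σ : Perm ι) (h : (sharedVertices F).Nonempty) :
    tailSwap (F, σ) = (reroute F (pivotSwap F h) (pivot F h), σ * pivotSwap F h) :=
  dif_pos h

theorem tailSwap_tailSwap (p : (ι → List V) × Perm ι) : tailSwap (tailSwap p) = p := by
  obtain ⟨F, σ⟩ := p
  by_cases h : (sharedVertices F).Nonempty
  · set G := reroute F (pivotSwap F h) (pivot F h)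
    have hGF : sharedVertices G = sharedVertices F := sharedVertices_reroute _ _ _
    have h' : (sharedVertices G).Nonempty := hGF ▸ h
    have hpivot : pivot G h' = pivot F h := by simp only [pivot, hGF]
    have hpaths : pathsThrough G (pivot F h) = pathsThrough F (pivot F h) :=
      pathsThrough_reroute fun _ => pivot_mem_of_pivotSwap_ne h
    have hswap : pivotSwap G h' = pivotSwap F h := by simp only [pivotSwap, hpivot, hpaths]
    rw [tailSwap_of_nonempty σ h, tailSwap_of_nonempty _ h', hswap, hpivot]
    exact Prod.ext (reroute_reroute F (swap_apply_self _ _) _)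
      (by rw [mul_assoc, pivotSwap, swap_mul_self, mul_one])
  · simp only [tailSwap, dif_neg h]

theorem sign_tailSwap {F : ι → List V} (hF : ∀ k, (F k).Nodup) (σ : Perm ι)
    (h : (sharedVertices F).Nonempty) : Perm.sign (tailSwap (F, σ)).2 = -Perm.sign σ := by
  rw [tailSwap_of_nonempty σ h, Perm.sign_mul, sign_pivotSwap hF, mul_neg_one]

end TailSwap

section Families

variable {n : ℕ} {R : V → V → Prop} {src snk : Fin n → V}

theorem IsFamily.nodup {F : Fin n → List V} {σ : Perm (Fin n)} (hF : IsFamily R src snk F σ)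
    (k : Fin n) : (F k).Nodup :=
  (hF k).1.2.2

variable (R src snk) in
theorem finite_setOf_isFamily [Fintype V] :
    {p : (Fin n → List V) × Perm (Fin n) | IsFamily R src snk p.1 p.2}.Finite := by
  refine ((Set.Finite.pi fun _ => List.finite_length_le V (Fintype.card V)).prod
    Set.finite_univ).subset ?_
  rintro ⟨F, σ⟩ hF
  exact ⟨fun k _ => (hF.nodup k).length_le_card, Set.mem_univ _⟩

theorem sharedVertices_nonempty_iff [DecidableEq V] {F : Fin n → List V}
    (hF : ∀ k, (F k).Nodup) : (sharedVertices F).Nonempty ↔ ¬NonIntersecting F := by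
  simp only [Finset.Nonempty, mem_sharedVertices hF, one_lt_card, pathsThrough, mem_filter,
    mem_univ, true_and, NonIntersecting, not_forall, not_not]
  constructor
  · rintro ⟨u, i, hi, j, hj, hij⟩
    exact ⟨i, j, hij, u, hi, hj⟩
  · rintro ⟨i, j, hij, u, hi, hj⟩
    exact ⟨u, i, hi, j, hj, hij⟩

theorem isFamily_reroute [DecidableEq V]
    (hacyc : ∀ (x : V) (l : List V), l ≠ [] → (x :: l).IsChain R → l.getLast? ≠ some x)
    {F : Fin n → List V} {σ τ : Perm (Fin n)} {v : V} (hF : IsFamily R src snk F σ)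
    (h : ∀ k, τ k ≠ k → v ∈ F k) : IsFamily R src snk (reroute F τ v) (σ * τ) := by
  intro k
  by_cases hk : τ k = k
  · simpa [reroute, hk] using hF k
  have hv := h k hk
  have hv' := h (τ k) fun e => hk (τ.injective e)
  obtain ⟨⟨-, hchain, -⟩, hhead, -⟩ := hF k
  obtain ⟨⟨-, hchain', -⟩, -, hlast⟩ := hF (τ k)
  have hc := isChain_spliceAt hchain hchain' hv hv'
  exact ⟨⟨List.ne_nil_of_mem (mem_spliceAt _ hv'), hc, nodup_of_isChain hacyc hc⟩,
    (head?_spliceAt hv hv').trans hhead, (getLast?_spliceAt _ hv').trans hlast⟩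

theorem finsum_sign_of_not_nonIntersecting_eq_zero [Fintype V] [LinearOrder V]
    (hacyc : ∀ (x : V) (l : List V), l ≠ [] → (x :: l).IsChain R → l.getLast? ≠ some x) :
    ∑ᶠ p ∈ {p : (Fin n → List V) × Perm (Fin n) | IsFamily R src snk p.1 p.2} \
      {p | NonIntersecting p.1}, (Perm.sign p.2 : ℤ) = 0 := by
  have hshared : ∀ p ∈ {p : (Fin n → List V) × Perm (Fin n) | IsFamily R src snk p.1 p.2} \
      {p | NonIntersecting p.1}, (sharedVertices p.1).Nonempty :=
    fun p ⟨hF, hNI⟩ => (sharedVertices_nonempty_iff hF.nodup).2 hNI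
  refine finsum_mem_eq_zero_of_involution ((finite_setOf_isFamily R src snk).sdiff)
    tailSwap ?_ ?_ ?_ fun p _ => tailSwap_tailSwap p
  · rintro ⟨F, σ⟩ hp
    rw [sign_tailSwap hp.1.nodup σ (hshared _ hp), Units.val_neg, add_neg_cancel]
  · rintro ⟨F, σ⟩ hp hfix
    have := sign_tailSwap hp.1.nodup σ (hshared _ hp)
    rw [hfix] at this
    exact units_ne_neg_self _ this
  · rintro ⟨F, σ⟩ hp
    have h := hshared _ hp
    have hG := isFamily_reroute hacyc hp.1 fun _ => pivot_mem_of_pivotSwap_ne h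
    rw [tailSwap_of_nonempty σ h]
    exact ⟨hG, (sharedVertices_nonempty_iff hG.nodup).1 (by rwa [sharedVertices_reroute])⟩

end Families

theorem lindstrom_gessel_viennot_general [Fintype V] {n : ℕ}
    (R : V → V → Prop)
    (hacyc : ∀ (x : V) (l : List V), l ≠ [] → List.Chain R x l → l.getLast? ≠ some x)
    (src snk : Fin n → V) :
    (∑ᶠ p ∈ {p : (Fin n → List V) × Equiv.Perm (Fin n) |
        IsFamily R src snk p.1 p.2}, (Equiv.Perm.sign p.2 : ℤ))
      = ∑ᶠ p ∈ {p : (Fin n → List V) × Equiv.Perm (Fin n) |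
          IsFamily R src snk p.1 p.2 ∧ NonIntersecting p.1},
          (Equiv.Perm.sign p.2 : ℤ) := by
  let _ : LinearOrder V := LinearOrder.lift' _ (Fintype.equivFin V).injective
  rw [← finsum_mem_inter_add_sdiff {p | NonIntersecting p.1} (finite_setOf_isFamily R src snk),
    finsum_sign_of_not_nonIntersecting_eq_zero hacyc, add_zero]
  rfl

/-- **Lindström–Gessel–Viennot.** In a finite acyclic `n`-network, the signed sum over
all families of `n` paths equals the signed sum over the non-intersecting families. -/
theorem lindstrom_gessel_viennot [Fintype V] {n : ℕ}
    (R : V → V → Prop)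
    (hacyc : ∀ (x : V) (l : List V), l ≠ [] → List.Chain R x l → l.getLast? ≠ some x)
    (src snk : Fin n → V)
    (hsrc : Function.Injective src) (hsnk : Function.Injective snk) :
    (∑ᶠ p ∈ {p : (Fin n → List V) × Equiv.Perm (Fin n) |
        IsFamily R src snk p.1 p.2}, (Equiv.Perm.sign p.2 : ℤ))
      = ∑ᶠ p ∈ {p : (Fin n → List V) × Equiv.Perm (Fin n) |
          IsFamily R src snk p.1 p.2 ∧ NonIntersecting p.1},
          (Equiv.Perm.sign p.2 : ℤ) :=
  lindstrom_gessel_viennot_general R hacyc src snk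
end

section
/- In the DFS walk on a plane rooted tree Y whose vertex orderings satisfy 'ascending children precede descending children' (with respect to an orientation A_0 of Y in which each edge carries exactly one arc), no downward-backward step ever immediately follows an upward-backward step. -/
/-- A plane rooted tree: a root label together with an ordered list of subtrees. -/
inductive PTree (V : Type) : Type
  | node : V → List (PTree V) → PTree V

namespace PTree

variable {V : Type}

/-- The root label of a plane rooted tree. -/
def root : PTree V → V
  | node v _ => v

/-- The depth-first-search walk: `dfs (node v [t₁,…,tₘ]) = v dfs(t₁) v … v dfs(tₘ) v`. -/
def dfs : PTree V → List V
  | node v ts => v :: (ts.attach.map (fun t => dfs t.1 ++ [v])).flatten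
decreasing_by simp only [PTree.node.sizeOf_spec]; have := List.sizeOf_lt_of_mem t.2; omega

/-- The list of vertex labels of a plane rooted tree. -/
def verts : PTree V → List V
  | node v ts => v :: (ts.attach.map (fun t => verts t.1)).flatten
decreasing_by simp only [PTree.node.sizeOf_spec]; have := List.sizeOf_lt_of_mem t.2; omega

/-- The downward arcs (from each vertex to each of its children). -/
def downArcs : PTree V → List (V × V)
  | node v ts => (ts.map fun t => (v, root t)) ++ (ts.attach.map (fun t => downArcs t.1)).flatten
decreasing_by simp only [PTree.node.sizeOf_spec]; have := List.sizeOf_lt_of_mem t.2; omega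

/-- `AscFirst A0 t` : at every vertex of `t`, the ascending children (those whose arc
points towards the parent in the orientation `A0`) precede the descending ones in the
plane order. -/
def AscFirst (A0 : Set (V × V)) : PTree V → Prop
  | node v ts => ts.Pairwise (fun t₁ t₂ => (root t₂, v) ∈ A0 → (root t₁, v) ∈ A0) ∧
      ∀ t ∈ ts.attach, AscFirst A0 t.1
decreasing_by simp only [PTree.node.sizeOf_spec]; have := List.sizeOf_lt_of_mem t.2; omega


/-! ### Auxiliary lemmas -/

lemma dfs_node (v : V) (ts : List (PTree V)) :
    dfs (node v ts) = v :: (ts.map fun u => dfs u ++ [v]).flatten := by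
  rw [dfs]
  congr 1
  rw [List.attach_map_val (l := ts) (f := fun u => dfs u ++ [v])]

lemma verts_node (v : V) (ts : List (PTree V)) :
    verts (node v ts) = v :: (ts.map verts).flatten := by
  rw [verts]
  congr 1
  rw [List.attach_map_val (l := ts) (f := verts)]

lemma downArcs_node (v : V) (ts : List (PTree V)) :
    downArcs (node v ts)
      = (ts.map fun u => (v, root u)) ++ (ts.map downArcs).flatten := by
  rw [downArcs]
  congr 1
  rw [List.attach_map_val (l := ts) (f := downArcs)]

lemma exists_dfs_eq (t : PTree V) : ∃ l, dfs t = root t :: l := by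
  cases t with
  | node v ts => exact ⟨_, by rw [dfs_node]; rfl⟩

lemma dfs_ne_nil (t : PTree V) : dfs t ≠ [] := by
  cases t with
  | node v ts => rw [dfs_node]; simp

theorem mem_verts_of_mem_dfs : ∀ (t : PTree V) (a : V), a ∈ dfs t → a ∈ verts t
  | node v ts, a, ha => by
    rw [dfs_node] at ha
    rw [verts_node]
    rcases List.mem_cons.mp ha with h | h
    · exact List.mem_cons.mpr (Or.inl h)
    · rw [List.mem_flatten] at h
      obtain ⟨l, hl, hal⟩ := h
      rw [List.mem_map] at hl
      obtain ⟨u, hu, rfl⟩ := hl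
      rcases List.mem_append.mp hal with h' | h'
      · have hrec := mem_verts_of_mem_dfs u a h'
        exact List.mem_cons.mpr (Or.inr (List.mem_flatten.mpr
          ⟨verts u, List.mem_map_of_mem hu, hrec⟩))
      · simp only [List.mem_singleton] at h'
        subst h'
        exact List.mem_cons_self
decreasing_by
  simp only [PTree.node.sizeOf_spec]; have := List.sizeOf_lt_of_mem hu; omega

theorem fst_mem_verts : ∀ (t : PTree V) (a b : V), (a, b) ∈ downArcs t → a ∈ verts t
  | node v ts, a, b, h => by
    rw [downArcs_node] at h
    rw [verts_node]
    rcases List.mem_append.mp h with h' | h'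
    · obtain ⟨u, hu, he⟩ := List.mem_map.mp h'
      cases he
      exact List.mem_cons_self
    · rw [List.mem_flatten] at h'
      obtain ⟨l, hl, hal⟩ := h'
      rw [List.mem_map] at hl
      obtain ⟨u, hu, rfl⟩ := hl
      have hrec := fst_mem_verts u a b hal
      exact List.mem_cons.mpr (Or.inr (List.mem_flatten.mpr
        ⟨verts u, List.mem_map_of_mem hu, hrec⟩))
decreasing_by
  simp only [PTree.node.sizeOf_spec]; have := List.sizeOf_lt_of_mem hu; omega

theorem snd_mem_verts : ∀ (t : PTree V) (a b : V), (a, b) ∈ downArcs t → b ∈ verts t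
  | node v ts, a, b, h => by
    rw [downArcs_node] at h
    rw [verts_node]
    rcases List.mem_append.mp h with h' | h'
    · obtain ⟨u, hu, he⟩ := List.mem_map.mp h'
      cases he
      exact List.mem_cons.mpr (Or.inr (List.mem_flatten.mpr
        ⟨verts u, List.mem_map_of_mem hu, by
          cases u with
          | node w us => rw [verts_node]; exact List.mem_cons_self⟩))
    · rw [List.mem_flatten] at h'
      obtain ⟨l, hl, hal⟩ := h'
      rw [List.mem_map] at hl
      obtain ⟨u, hu, rfl⟩ := hl
      have hrec := snd_mem_verts u a b hal
      exact List.mem_cons.mpr (Or.inr (List.mem_flatten.mpr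
        ⟨verts u, List.mem_map_of_mem hu, hrec⟩))
decreasing_by
  simp only [PTree.node.sizeOf_spec]; have := List.sizeOf_lt_of_mem hu; omega

/-- The target of any down-arc lies in the subtrees' vertex lists. -/
lemma snd_mem_tail {v : V} {ts : List (PTree V)} {a b : V}
    (h : (a, b) ∈ downArcs (node v ts)) : b ∈ (ts.map verts).flatten := by
  rw [downArcs_node] at h
  rcases List.mem_append.mp h with h' | h'
  · obtain ⟨u, hu, he⟩ := List.mem_map.mp h'
    cases he
    exact List.mem_flatten.mpr ⟨verts u, List.mem_map_of_mem hu, by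
      cases u with
      | node w us => rw [verts_node]; exact List.mem_cons_self⟩
  · rw [List.mem_flatten] at h'
    obtain ⟨l, hl, hal⟩ := h'
    rw [List.mem_map] at hl
    obtain ⟨u, hu, rfl⟩ := hl
    exact List.mem_flatten.mpr
      ⟨verts u, List.mem_map_of_mem hu, snd_mem_verts u a b hal⟩

/-- Localization of arcs: if the source of an arc lies in a given subtree, then
(by nodup) the arc itself belongs to that subtree. -/
lemma arc_localize : ∀ (ts : List (PTree V)), ((ts.map verts).flatten).Nodup →
    ∀ s ∈ ts, ∀ a b : V, a ∈ verts s → (a, b) ∈ (ts.map downArcs).flatten →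
      (a, b) ∈ downArcs s := by
  intro ts
  induction ts with
  | nil => simp
  | cons u ts ih =>
    intro hnd s hs a b has hab
    simp only [List.map_cons, List.flatten_cons] at hnd hab
    rw [List.nodup_append] at hnd
    obtain ⟨h1, h2, hdisj⟩ := hnd
    rcases List.mem_append.mp hab with h | h
    · rcases List.mem_cons.mp hs with rfl | hs'
      · exact h
      · exfalso
        have ha1 : a ∈ verts u := fst_mem_verts u a b h
        have ha2 : a ∈ (ts.map verts).flatten :=
          List.mem_flatten.mpr ⟨verts s, List.mem_map_of_mem hs', has⟩
        exact hdisj a ha1 a ha2 rfl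
    · rcases List.mem_cons.mp hs with rfl | hs'
      · exfalso
        have ha2 : a ∈ (ts.map verts).flatten := by
          obtain ⟨arcs, harcs, hmem⟩ := List.mem_flatten.mp h
          obtain ⟨w, hw, rfl⟩ := List.mem_map.mp harcs
          exact List.mem_flatten.mpr
            ⟨verts w, List.mem_map_of_mem hw, fst_mem_verts w a b hmem⟩
        exact hdisj a has a ha2 rfl
      · exact ih h2 s hs' a b has h

lemma blocks_getLast? (v : V) :
    ∀ ts : List (PTree V), ts ≠ [] →
      ((ts.map fun u => dfs u ++ [v]).flatten).getLast? = some v := by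
  intro ts
  induction ts with
  | nil => simp
  | cons u ts ih =>
    intro _
    simp only [List.map_cons, List.flatten_cons]
    rw [List.getLast?_append]
    by_cases h : ts = []
    · subst h; simp
    · rw [ih h]; rfl

lemma dfs_getLast? (t : PTree V) : (dfs t).getLast? = some (root t) := by
  cases t with
  | node v ts =>
    show (dfs (node v ts)).getLast? = some v
    rw [dfs_node]
    by_cases h : ts = []
    · subst h; simp
    · show ([v] ++ _).getLast? = some v
      rw [List.getLast?_append, blocks_getLast? v ts h]
      rfl

lemma eq_root_of_dfs_concat {t : PTree V} {l : List V} {a : V}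
    (h : dfs t = l ++ [a]) : a = root t := by
  have h1 := dfs_getLast? t
  rw [h, List.getLast?_concat] at h1
  exact Option.some.inj h1

lemma triple_decomp {α : Type*} {l : List α} {k : ℕ} {x y z : α}
    (hx : l[k]? = some x) (hy : l[k+1]? = some y) (hz : l[k+2]? = some z) :
    ∃ l1 l2, l = l1 ++ x :: y :: z :: l2 := by
  obtain ⟨h1, e1⟩ := List.getElem?_eq_some_iff.mp hx
  obtain ⟨h2, e2⟩ := List.getElem?_eq_some_iff.mp hy
  obtain ⟨h3, e3⟩ := List.getElem?_eq_some_iff.mp hz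
  refine ⟨l.take k, l.drop (k+3), ?_⟩
  have hd : l.drop k = x :: y :: z :: l.drop (k+3) := by
    rw [← List.getElem_cons_drop h1, e1]
    congr 1
    rw [← List.getElem_cons_drop h2, e2]
    congr 1
    rw [show k + 1 + 1 = k + 2 from rfl, ← List.getElem_cons_drop h3, e3]
  conv_lhs => rw [← List.take_append_drop k l]
  rw [hd]

theorem key (A0 : Set (V × V)) : ∀ (n : ℕ) (t : PTree V), sizeOf t ≤ n →
    (verts t).Nodup →
    (∀ i j : V, (i, j) ∈ downArcs t → ((i, j) ∈ A0 ↔ (j, i) ∉ A0)) →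
    AscFirst A0 t →
    ∀ (l1 l2 : List V) (x y z : V), dfs t = l1 ++ x :: y :: z :: l2 →
      (y, x) ∈ downArcs t → (x, y) ∉ A0 → (y, z) ∈ downArcs t → (y, z) ∉ A0 →
      False := by
  intro n
  induction n with
  | zero =>
    intro t ht
    exfalso
    cases t with
    | node v ts => simp only [PTree.node.sizeOf_spec] at ht; omega
  | succ n IH =>
    intro t ht hnd hor hasc l1 l2 x y z hdfs hyx hxy hyz hyz'
    obtain ⟨v, ts⟩ := t
    rw [dfs_node] at hdfs
    rw [AscFirst] at hasc
    obtain ⟨hpair, hsub⟩ := hasc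
    have hndv := hnd
    rw [verts_node] at hndv
    have hndflat : ((ts.map verts).flatten).Nodup := (List.nodup_cons.mp hndv).2
    have hvnot : v ∉ (ts.map verts).flatten := (List.nodup_cons.mp hndv).1
    have hroot : ∀ a : V, (a, v) ∉ downArcs (node v ts) :=
      fun a h => hvnot (snd_mem_tail h)
    have hloc : ∀ s ∈ ts, ∀ a b : V, a ∈ verts s →
        (a, b) ∈ downArcs (node v ts) → (a, b) ∈ downArcs s := by
      intro s hs a b has hab
      rw [downArcs_node] at hab
      rcases List.mem_append.mp hab with h | h
      · obtain ⟨u, hu, he⟩ := List.mem_map.mp h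
        cases he
        exact absurd (List.mem_flatten.mpr ⟨verts s, List.mem_map_of_mem hs, has⟩)
          hvnot
      · exact arc_localize ts hndflat s hs a b has h
    cases l1 with
    | nil =>
      injection hdfs with h1 h2
      subst h1
      exact hroot y hyx
    | cons a l1 =>
      injection hdfs with ha htl
      have inner : ∀ ss : List (PTree V), (∀ s ∈ ss, s ∈ ts) →
          ss.Pairwise (fun s s' => (root s', v) ∈ A0 → (root s, v) ∈ A0) →
          ∀ l1 l2 : List V,
            ((ss.map fun u => dfs u ++ [v]).flatten) = l1 ++ x :: y :: z :: l2 →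
            False := by
        intro ss
        induction ss with
        | nil => intro _ _ l1 l2 h; simp at h
        | cons s ss ihss =>
          intro hmem hp l1 l2 heq
          simp only [List.map_cons, List.flatten_cons] at heq
          rcases List.append_eq_append_iff.mp heq with ⟨w, hl1, hrest⟩ | ⟨w, hblk, hw⟩
          · exact ihss (fun u hu => hmem u (List.mem_cons_of_mem _ hu))
              (hp.of_cons) w l2 hrest
          · cases w with
            | nil =>
              exact ihss (fun u hu => hmem u (List.mem_cons_of_mem _ hu))
                (hp.of_cons) [] l2 hw.symm
            | cons x' w =>
              injection hw with hx1 hw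
              subst hx1
              cases w with
              | nil =>
                -- x = v, y is the root of the next subtree: (y, v) is an arc, absurd
                have hx : x = v := by
                  have h1 : (dfs s ++ [v]).getLast? = some v := List.getLast?_concat
                  rw [hblk, List.getLast?_concat] at h1
                  exact Option.some.inj h1
                subst hx
                exact hroot y hyx
              | cons y' w =>
                injection hw with hy1 hw
                subst hy1
                cases w with
                | nil =>
                  -- the key case: x = root s, y = v, z = root s'
                  have hsplit : dfs s ++ [v] = (l1 ++ [x]) ++ [y] := by
                    rw [hblk]; simp
                  obtain ⟨hds, hyv⟩ := List.append_inj' hsplit rfl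
                  have hyv : y = v := ((List.cons.injEq _ _ _ _ ▸ hyv).1 : v = y).symm
                  have hx : x = root s := eq_root_of_dfs_concat hds
                  cases ss with
                  | nil => simp at hw
                  | cons s' ss' =>
                    obtain ⟨l', hl'⟩ := exists_dfs_eq s'
                    have hz : z = root s' := by
                      simp only [List.map_cons, List.flatten_cons, hl',
                        List.cons_append, List.append_assoc] at hw
                      exact (List.cons.injEq _ _ _ _ ▸ hw).1
                    have h1 : (z, v) ∈ A0 := by
                      by_contra hc
                      exact hyz' ((hor y z hyz).mpr (by rw [hyv]; exact hc))
                    have h2 : (root s', v) ∈ A0 → (root s, v) ∈ A0 :=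
                      (List.pairwise_cons.mp hp).1 s' (List.mem_cons_self)
                    apply hxy
                    rw [hx, hyv]
                    exact h2 (hz ▸ h1)
                | cons z' w =>
                  injection hw with hz1 hw
                  subst hz1
                  rcases List.eq_nil_or_concat w with rfl | ⟨w4, b, rfl⟩
                  · -- z = v : (y, v) is an arc, absurd
                    have hsplit : dfs s ++ [v] = (l1 ++ [x, y]) ++ [z] := by
                      rw [hblk]; simp
                    obtain ⟨-, hzv⟩ := List.append_inj' hsplit rfl
                    have hzv : z = v := ((List.cons.injEq _ _ _ _ ▸ hzv).1 : v = z).symm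
                    subst hzv
                    exact hroot y hyz
                  · -- the triple lies inside dfs s : recurse
                    have hsplit : dfs s ++ [v] = (l1 ++ x :: y :: z :: w4) ++ [b] := by
                      rw [hblk]; simp [List.concat_eq_append]
                    obtain ⟨hds, -⟩ := List.append_inj' hsplit rfl
                    have hs : s ∈ ts := hmem s (List.mem_cons_self)
                    have hsize : sizeOf s ≤ n := by
                      have h1 := List.sizeOf_lt_of_mem hs
                      simp only [PTree.node.sizeOf_spec] at ht
                      omega
                    have hnds : (verts s).Nodup :=
                      hndflat.sublist (List.sublist_flatten_of_mem
                        (List.mem_map_of_mem hs))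
                    have hsubarcs : ∀ p q : V, (p, q) ∈ downArcs s →
                        (p, q) ∈ downArcs (node v ts) := by
                      intro p q h
                      rw [downArcs_node]
                      exact List.mem_append.mpr (Or.inr (List.mem_flatten.mpr
                        ⟨downArcs s, List.mem_map_of_mem hs, h⟩))
                    have hors : ∀ i j : V, (i, j) ∈ downArcs s →
                        ((i, j) ∈ A0 ↔ (j, i) ∉ A0) :=
                      fun i j h => hor i j (hsubarcs i j h)
                    have hascs : AscFirst A0 s := hsub ⟨s, hs⟩ (List.mem_attach _ _)
                    have hy_in : y ∈ verts s :=
                      mem_verts_of_mem_dfs s y (by rw [hds]; simp)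
                    exact IH s hsize hnds hors hascs l1 w4 x y z hds
                      (hloc s hs y x hy_in hyx) hxy (hloc s hs y z hy_in hyz) hyz'
      exact inner ts (fun s h => h) hpair l1 l2 htl

/-- In the DFS walk on a plane rooted tree whose local orders satisfy "ascending
children precede descending children" (for an orientation `A0` putting exactly one arc
on each edge), an upward-backward step is never immediately followed by a
downward-backward step. -/
theorem no_downBack_after_upBack (t : PTree V) (A0 : Set (V × V))
    (hnd : (verts t).Nodup)
    (hor : ∀ i j : V, (i, j) ∈ downArcs t → ((i, j) ∈ A0 ↔ (j, i) ∉ A0))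
    (hasc : AscFirst A0 t) :
    ∀ (k : ℕ) (x y z : V),
      (dfs t)[k]? = some x → (dfs t)[k + 1]? = some y → (dfs t)[k + 2]? = some z →
      ((y, x) ∈ downArcs t ∧ (x, y) ∉ A0) →
      ¬ ((y, z) ∈ downArcs t ∧ (y, z) ∉ A0) := by
  intro k x y z hx hy hz h1 hc
  obtain ⟨l1, l2, hdec⟩ := triple_decomp hx hy hz
  exact key A0 (sizeOf t) t le_rfl hnd hor hasc l1 l2 x y z hdec h1.1 h1.2 hc.1 hc.2

end PTree
end
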